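/- arXiv:1906.08181 — 7 statements merged into one kernel-verified Lean document; each statement's English description precedes it below -/
import Mathlib

section
/- Let H be a complex Hilbert space, U : H → H a unitary operator and P : H → H an orthogonal projection, and set Φ := U*PU − P. Then Φ is self-adjoint, Φ² ≤ 1 (i.e. 1 − Φ² is a positive operator), and Φ² commutes with P. -/
/-!
With `Q := U* P U`, which is again an orthogonal projection because `U U* = 1`, the flux is the
difference `Φ = Q - P` of two projections. For any two idempotents one has the identities
`1 - (Q - P)² = (P + Q - 1)²` and `(Q - P)² P = P - P Q P = P (Q - P)²`; since `P + Q - 1` is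
self-adjoint, the first exhibits `1 - Φ²` as a square, hence positive.
-/

open ContinuousLinearMap

section Ring

variable {R : Type*} [Ring R] {p q : R}

theorem IsIdempotentElem.one_sub_sq_sub_eq_sq (hp : IsIdempotentElem p)
    (hq : IsIdempotentElem q) : 1 - (q - p) ^ 2 = (p + q - 1) ^ 2 := by
  simp only [sq, sub_mul, mul_sub, add_mul, mul_add, hp.eq, hq.eq, one_mul, mul_one]
  abel

theorem IsIdempotentElem.commute_sq_sub (hp : IsIdempotentElem p) (hq : IsIdempotentElem q) :
    Commute ((q - p) ^ 2) p := by
  simp only [Commute, SemiconjBy, sq, sub_mul, mul_sub, mul_assoc, hp.eq, hq.eq]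
  simp only [← mul_assoc, hp.eq]
  abel

end Ring

namespace IsStarProjection

theorem star_mul_mul {R : Type*} [Ring R] [StarRing R] {p u : R} (hp : IsStarProjection p)
    (hu : u * star u = 1) : IsStarProjection (star u * p * u) where
  isIdempotentElem :=
    calc star u * p * u * (star u * p * u) = star u * (p * (u * star u) * p) * u := by
          simp only [mul_assoc]
      _ = star u * p * u := by rw [hu, mul_one, hp.isIdempotentElem.eq]
  isSelfAdjoint := by
    rw [IsSelfAdjoint, star_mul, star_mul, star_star, hp.isSelfAdjoint.star_eq, mul_assoc]

theorem one_sub_sq_sub_nonneg {R : Type*} [Ring R] [StarRing R] [PartialOrder R]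
    [StarOrderedRing R] {p q : R} (hp : IsStarProjection p) (hq : IsStarProjection q) :
    0 ≤ 1 - (q - p) ^ 2 := by
  rw [hp.isIdempotentElem.one_sub_sq_sub_eq_sq hq.isIdempotentElem]
  exact ((hp.isSelfAdjoint.add hq.isSelfAdjoint).sub (.one R)).sq_nonneg

end IsStarProjection

theorem stmt_0_general {H : Type*} [NormedAddCommGroup H] [InnerProductSpace ℂ H] [CompleteSpace H]
    (U P : H →L[ℂ] H)
    (hU2 : U * adjoint U = 1)
    (hPsa : IsSelfAdjoint P) (hPidem : P * P = P)
    (Φ : H →L[ℂ] H) (hΦ : Φ = adjoint U * P * U - P) :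
    IsSelfAdjoint Φ ∧ (1 - Φ ^ 2).IsPositive ∧ Commute (Φ ^ 2) P := by
  rw [← star_eq_adjoint] at hU2 hΦ
  subst hΦ
  have hP : IsStarProjection P := ⟨hPidem, hPsa⟩
  have hQ := hP.star_mul_mul hU2
  exact ⟨hQ.isSelfAdjoint.sub hPsa, (nonneg_iff_isPositive _).mp (hP.one_sub_sq_sub_nonneg hQ),
    hP.isIdempotentElem.commute_sq_sub hQ.isIdempotentElem⟩

/-- For a unitary `U` and an orthogonal projection `P` on a complex Hilbert
space, the flux operator `Φ = U*PU − P` is self-adjoint, satisfies `Φ² ≤ 1` (i.e. `1 − Φ²` is a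
positive operator), and `Φ²` commutes with `P`. -/
theorem stmt_0 {H : Type*} [NormedAddCommGroup H] [InnerProductSpace ℂ H] [CompleteSpace H]
    (U P : H →L[ℂ] H)
    (hU1 : adjoint U * U = 1) (hU2 : U * adjoint U = 1)
    (hPsa : IsSelfAdjoint P) (hPidem : P * P = P)
    (Φ : H →L[ℂ] H) (hΦ : Φ = adjoint U * P * U - P) :
    IsSelfAdjoint Φ ∧ (1 - Φ ^ 2).IsPositive ∧ Commute (Φ ^ 2) P :=
  stmt_0_general U P hU2 hPsa hPidem Φ hΦ
end

section
/- Let H be a complex Hilbert space, U : H → H unitary, P an orthogonal projection, Φ := U*PU − P. Then for every ψ ∈ H: (i) Φψ = −ψ if and only if Pψ = ψ and P(Uψ) = 0; (ii) Φψ = ψ if and only if Pψ = 0 and P(Uψ) = Uψ. In other words, ker(Φ + 1) = ker(PUP restricted to Ran P) and ker(Φ − 1) = ker((1−P)U(1−P) restricted to Ran(1−P)). -/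
open ContinuousLinearMap

local notation "⟪" x ", " y "⟫" => @inner ℂ _ _ x y

/-- For a unitary `U`, an orthogonal projection `P`, and the flux
`Φ = U*PU − P`: for every `ψ`, `Φψ = −ψ` iff (`Pψ = ψ` and `P(Uψ) = 0`), and `Φψ = ψ` iff
(`Pψ = 0` and `P(Uψ) = Uψ`); i.e. `ker(Φ+1) = ker(PUP ↾ Ran P)` and
`ker(Φ−1) = ker(P⊥UP⊥ ↾ Ran P⊥)`. -/
theorem stmt_1 {H : Type*} [NormedAddCommGroup H] [InnerProductSpace ℂ H] [CompleteSpace H]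
    (U P : H →L[ℂ] H)
    (hU1 : adjoint U * U = 1) (hU2 : U * adjoint U = 1)
    (hPsa : IsSelfAdjoint P) (hPidem : P * P = P)
    (Φ : H →L[ℂ] H) (hΦ : Φ = adjoint U * P * U - P) :
    ∀ ψ : H,
      (Φ ψ = -ψ ↔ (P ψ = ψ ∧ P (U ψ) = 0)) ∧
      (Φ ψ = ψ ↔ (P ψ = 0 ∧ P (U ψ) = U ψ)) := by
  have hPadj : adjoint P = P := by
    rw [← ContinuousLinearMap.star_eq_adjoint]; exact hPsa
  have hUU : ∀ φ : H, adjoint U (U φ) = φ := by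
    intro φ
    have := congrArg (fun T => T φ) hU1
    simpa using this
  -- ⟪φ, P φ⟫ = ‖P φ‖²
  have hPinner : ∀ φ : H, ⟪φ, P φ⟫ = (‖P φ‖ : ℂ) ^ 2 := by
    intro φ
    have h1 : P φ = P (P φ) := by
      conv_lhs => rw [← hPidem]
      rfl
    calc ⟪φ, P φ⟫ = ⟪φ, adjoint P (P φ)⟫ := by rw [hPadj, ← h1]
      _ = ⟪P φ, P φ⟫ := adjoint_inner_right P _ _
      _ = (‖P φ‖ : ℂ) ^ 2 := inner_self_eq_norm_sq_to_K _
  -- ‖U φ‖ = ‖φ‖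
  have hUnorm : ∀ φ : H, ‖U φ‖ = ‖φ‖ := by
    intro φ
    have h1 : ⟪U φ, U φ⟫ = ⟪φ, φ⟫ := by
      rw [← adjoint_inner_right, hUU]
    have h2 := congrArg RCLike.re h1
    rw [inner_self_eq_norm_sq, inner_self_eq_norm_sq] at h2
    nlinarith [norm_nonneg (U φ), norm_nonneg φ]
  -- ‖P φ‖ ≤ ‖φ‖
  have hPnorm : ∀ φ : H, ‖P φ‖ ≤ ‖φ‖ := by
    intro φ
    have h1 : ‖⟪φ, P φ⟫‖ ≤ ‖φ‖ * ‖P φ‖ := norm_inner_le_norm _ _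
    rw [hPinner] at h1
    have h2 : ‖((‖P φ‖ : ℂ))^2‖ = ‖P φ‖^2 := by
      rw [norm_pow, Complex.norm_real, norm_norm]
    rw [h2] at h1
    nlinarith [norm_nonneg (P φ), norm_nonneg φ]
  -- P φ = φ from ‖P φ‖ = ‖φ‖
  have hPeq : ∀ φ : H, ‖P φ‖ = ‖φ‖ → P φ = φ := by
    intro φ h
    have hns : ‖φ - P φ‖^2 = ‖φ‖^2 - 2 * (RCLike.re (⟪φ, P φ⟫)) + ‖P φ‖^2 :=
      norm_sub_sq (𝕜 := ℂ) φ (P φ)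
    have hre : RCLike.re (⟪φ, P φ⟫) = ‖P φ‖^2 := by
      rw [hPinner]
      norm_cast
    rw [hre, h] at hns
    have h0 : ‖φ - P φ‖^2 = 0 := by rw [hns]; ring
    have h1 : ‖φ - P φ‖ = 0 := by nlinarith [norm_nonneg (φ - P φ)]
    have := norm_eq_zero.mp h1
    have := sub_eq_zero.mp this
    exact this.symm
  -- key: ⟪φ, U*P U φ⟫ = ‖P (U φ)‖²
  have hAinner : ∀ φ : H, ⟪φ, adjoint U (P (U φ))⟫ = (‖P (U φ)‖ : ℂ)^2 := by
    intro φ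
    rw [adjoint_inner_right, hPinner]
  intro ψ
  have happ : Φ ψ = adjoint U (P (U ψ)) - P ψ := by
    rw [hΦ]; rfl
  constructor
  · constructor
    · intro hψ
      rw [happ] at hψ
      have heq : adjoint U (P (U ψ)) = P ψ - ψ := by
        have := sub_eq_iff_eq_add.mp hψ
        rw [this]; abel
      have hA := hAinner ψ
      rw [heq, inner_sub_right, hPinner, inner_self_eq_norm_sq_to_K] at hA
      have hR : (‖P (U ψ)‖:ℝ)^2 = ‖P ψ‖^2 - ‖ψ‖^2 := by
        have := congrArg RCLike.re hA
        simpa [← Complex.ofReal_pow] using this.symm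
      have hle := hPnorm ψ
      have hsq0 : ‖P (U ψ)‖^2 ≤ 0 := by
        nlinarith [mul_self_le_mul_self (norm_nonneg (P ψ)) hle]
      have h2 : ‖P (U ψ)‖^2 = 0 := le_antisymm hsq0 (sq_nonneg _)
      have h0 : ‖P (U ψ)‖ = 0 := by
        exact (pow_eq_zero_iff two_ne_zero).mp h2
      have hsq : ‖P ψ‖^2 = ‖ψ‖^2 := by nlinarith
      have hP1 : ‖P ψ‖ = ‖ψ‖ := by
        have := congrArg Real.sqrt hsq
        rwa [Real.sqrt_sq (norm_nonneg _), Real.sqrt_sq (norm_nonneg _)] at this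
      exact ⟨hPeq ψ hP1, norm_eq_zero.mp h0⟩
    · rintro ⟨h1, h2⟩
      rw [happ, h1, h2, map_zero, zero_sub]
  · constructor
    · intro hψ
      rw [happ] at hψ
      have heq : adjoint U (P (U ψ)) = P ψ + ψ := by
        have := sub_eq_iff_eq_add.mp hψ
        rw [this]; abel
      have hA := hAinner ψ
      rw [heq, inner_add_right, hPinner, inner_self_eq_norm_sq_to_K] at hA
      have hR : (‖P (U ψ)‖:ℝ)^2 = ‖P ψ‖^2 + ‖ψ‖^2 := by
        have := congrArg RCLike.re hA
        simpa [← Complex.ofReal_pow] using this.symm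
      have hle : ‖P (U ψ)‖ ≤ ‖ψ‖ := by
        calc ‖P (U ψ)‖ ≤ ‖U ψ‖ := hPnorm _
          _ = ‖ψ‖ := hUnorm _
      have hsq0 : ‖P ψ‖^2 ≤ 0 := by
        nlinarith [mul_self_le_mul_self (norm_nonneg (P (U ψ))) hle]
      have h2 : ‖P ψ‖^2 = 0 := le_antisymm hsq0 (sq_nonneg _)
      have h0 : ‖P ψ‖ = 0 := by
        exact (pow_eq_zero_iff two_ne_zero).mp h2
      have hsq : ‖P (U ψ)‖^2 = ‖ψ‖^2 := by nlinarith
      have hP1 : ‖P (U ψ)‖ = ‖U ψ‖ := by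
        rw [hUnorm]
        have := congrArg Real.sqrt hsq
        rwa [Real.sqrt_sq (norm_nonneg _), Real.sqrt_sq (norm_nonneg _)] at this
      exact ⟨norm_eq_zero.mp h0, hPeq _ hP1⟩
    · rintro ⟨h1, h2⟩
      rw [happ, h1, h2, hUU, sub_zero]
end

section
/- Let H be a complex Hilbert space, U : H → H unitary, P an orthogonal projection, Φ := U*PU − P. Then ker(Φ − 1) = ker(Φ² − 1) ∩ ker P and ker(Φ + 1) = ker(Φ² − 1) ∩ Ran P. Consequently, if ker(Φ − 1) and ker(Φ + 1) are finite-dimensional then ind(Φ) := dim ker(Φ − 1) − dim ker(Φ + 1) equals dim(ker(Φ² − 1) ∩ ker P) − dim(ker(Φ² − 1) ∩ Ran P). -/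
open ContinuousLinearMap
open scoped InnerProductSpace

/-!
`Φ = Q - P` is a difference of two orthogonal projections, `Q = U*PU` being one because `U` is a
co-isometry. If `Φ x = x`, then `‖x‖² = Re⟪Φ x, x⟫ = ‖Q x‖² - ‖P x‖² ≤ ‖x‖² - ‖P x‖²`, so
`P x = 0`. Conversely, if `Φ² x = x` and `P x = 0`, then `x = (1 - P) Q x`, so `‖x‖ ≤ ‖Q x‖`,
which forces `Q x = x` and hence `Φ x = x`. The eigenvalue `-1` is the same statement for the
complementary projections `1 - Q` and `1 - P`, whose difference is `-Φ`.
-/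

theorem IsStarProjection.star_mul_mul_s2 {R : Type*} [Monoid R] [StarMul R] {p u : R}
    (hp : IsStarProjection p) (hu : u * star u = 1) : IsStarProjection (star u * p * u) where
  isIdempotentElem := by
    calc star u * p * u * (star u * p * u) = star u * (p * (u * star u) * p) * u := by
          simp only [mul_assoc]
      _ = star u * p * u := by rw [hu, mul_one, hp.isIdempotentElem.eq, mul_assoc]
  isSelfAdjoint := hp.isSelfAdjoint.conjugate' u

namespace IsStarProjection

variable {𝕜 E : Type*} [RCLike 𝕜] [NormedAddCommGroup E] [InnerProductSpace 𝕜 E] [CompleteSpace E]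
  {P Q T : E →L[𝕜] E}

theorem re_inner_apply_self (hT : IsStarProjection T) (x : E) :
    RCLike.re ⟪T x, x⟫_𝕜 = ‖T x‖ ^ 2 := by
  obtain ⟨K, _, rfl⟩ := isStarProjection_iff_eq_starProjection.mp hT
  exact K.re_inner_starProjection_eq_normSq x

theorem norm_apply_le (hT : IsStarProjection T) (x : E) : ‖T x‖ ≤ ‖x‖ := by
  obtain ⟨K, _, rfl⟩ := isStarProjection_iff_eq_starProjection.mp hT
  exact K.norm_starProjection_apply_le x

theorem apply_eq_self_of_norm_le (hT : IsStarProjection T) {x : E} (h : ‖x‖ ≤ ‖T x‖) :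
    T x = x := by
  obtain ⟨K, _, rfl⟩ := isStarProjection_iff_eq_starProjection.mp hT
  exact K.starProjection_eq_self_iff.mpr <|
    (K.mem_iff_norm_starProjection x).mpr (le_antisymm (K.norm_starProjection_apply_le x) h)

theorem sub_apply_eq_self_iff (hP : IsStarProjection P) (hQ : IsStarProjection Q) (x : E) :
    (Q - P) x = x ↔ ((Q - P) ^ 2) x = x ∧ P x = 0 := by
  constructor
  · intro h
    have hnorm : ‖Q x‖ ^ 2 - ‖P x‖ ^ 2 = ‖x‖ ^ 2 := by
      rw [← hQ.re_inner_apply_self, ← hP.re_inner_apply_self, ← map_sub, ← inner_sub_left,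
        ← sub_apply, h, inner_self_eq_norm_sq]
    have hPx : ‖P x‖ = 0 := by
      nlinarith [hQ.norm_apply_le x, norm_nonneg (Q x), norm_nonneg (P x)]
    exact ⟨by rw [sq, mul_apply_eq_comp, h, h], norm_eq_zero.mp hPx⟩
  · rintro ⟨h2, hPx⟩
    have hΦx : (Q - P) x = Q x := by rw [sub_apply, hPx, sub_zero]
    have hx : (1 - P) (Q x) = x := by
      rw [sq, mul_apply_eq_comp, hΦx, sub_apply, ← mul_apply_eq_comp Q Q,
        hQ.isIdempotentElem.eq] at h2
      rwa [sub_apply, one_apply_eq_self]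
    have hle : ‖x‖ ≤ ‖Q x‖ := calc
      ‖x‖ = ‖(1 - P) (Q x)‖ := by rw [hx]
      _ ≤ ‖Q x‖ := hP.one_sub.norm_apply_le (Q x)
    rw [hΦx, hQ.apply_eq_self_of_norm_le hle]

theorem sub_apply_eq_neg_iff (hP : IsStarProjection P) (hQ : IsStarProjection Q) (x : E) :
    (Q - P) x = -x ↔ ((Q - P) ^ 2) x = x ∧ P x = x := by
  have h := sub_apply_eq_self_iff hP.one_sub hQ.one_sub x
  rwa [show (1 - Q) - (1 - P) = -(Q - P) by abel, neg_sq, neg_apply, neg_eq_iff_eq_neg,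
    sub_apply 1 P, one_apply_eq_self, sub_eq_zero, eq_comm (a := x)] at h

theorem ker_sub_sub_one (hP : IsStarProjection P) (hQ : IsStarProjection Q) :
    LinearMap.ker ((Q - P - 1 : E →L[𝕜] E) : E →ₗ[𝕜] E) =
      LinearMap.ker (((Q - P) ^ 2 - 1 : E →L[𝕜] E) : E →ₗ[𝕜] E) ⊓
        LinearMap.ker (P : E →ₗ[𝕜] E) := by
  ext x
  simpa only [LinearMap.mem_ker, Submodule.mem_inf, coe_coe, sub_apply, one_apply_eq_self,
    sub_eq_zero] using sub_apply_eq_self_iff hP hQ x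

theorem ker_sub_add_one (hP : IsStarProjection P) (hQ : IsStarProjection Q) :
    LinearMap.ker ((Q - P + 1 : E →L[𝕜] E) : E →ₗ[𝕜] E) =
      LinearMap.ker (((Q - P) ^ 2 - 1 : E →L[𝕜] E) : E →ₗ[𝕜] E) ⊓
        LinearMap.range (P : E →ₗ[𝕜] E) := by
  have hrange : ∀ x, x ∈ LinearMap.range (P : E →ₗ[𝕜] E) ↔ P x = x := fun x =>
    ⟨fun ⟨y, hy⟩ => hy ▸ by rw [coe_coe, ← mul_apply_eq_comp, hP.isIdempotentElem.eq],
      fun h => ⟨x, h⟩⟩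
  ext x
  simpa only [LinearMap.mem_ker, Submodule.mem_inf, hrange, coe_coe, add_apply, sub_apply,
    one_apply_eq_self, sub_eq_zero, add_eq_zero_iff_eq_neg] using sub_apply_eq_neg_iff hP hQ x

end IsStarProjection

theorem stmt_2_general {H : Type*} [NormedAddCommGroup H] [InnerProductSpace ℂ H] [CompleteSpace H]
    (U P : H →L[ℂ] H)
    (hU2 : U * adjoint U = 1)
    (hPsa : IsSelfAdjoint P) (hPidem : P * P = P)
    (Φ : H →L[ℂ] H) (hΦ : Φ = adjoint U * P * U - P) :
    LinearMap.ker ((Φ - 1 : H →L[ℂ] H) : H →ₗ[ℂ] H) = LinearMap.ker ((Φ ^ 2 - 1 : H →L[ℂ] H) : H →ₗ[ℂ] H) ⊓ LinearMap.ker (P : H →ₗ[ℂ] H) ∧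
    LinearMap.ker ((Φ + 1 : H →L[ℂ] H) : H →ₗ[ℂ] H) = LinearMap.ker ((Φ ^ 2 - 1 : H →L[ℂ] H) : H →ₗ[ℂ] H) ⊓ LinearMap.range (P : H →ₗ[ℂ] H) ∧
    (FiniteDimensional ℂ (LinearMap.ker ((Φ - 1 : H →L[ℂ] H) : H →ₗ[ℂ] H)) →
      FiniteDimensional ℂ (LinearMap.ker ((Φ + 1 : H →L[ℂ] H) : H →ₗ[ℂ] H)) →
      (Module.finrank ℂ (LinearMap.ker ((Φ - 1 : H →L[ℂ] H) : H →ₗ[ℂ] H)) : ℤ)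
          - (Module.finrank ℂ (LinearMap.ker ((Φ + 1 : H →L[ℂ] H) : H →ₗ[ℂ] H)) : ℤ)
        = (Module.finrank ℂ ↥(LinearMap.ker ((Φ ^ 2 - 1 : H →L[ℂ] H) : H →ₗ[ℂ] H) ⊓ LinearMap.ker (P : H →ₗ[ℂ] H)) : ℤ)
          - (Module.finrank ℂ ↥(LinearMap.ker ((Φ ^ 2 - 1 : H →L[ℂ] H) : H →ₗ[ℂ] H) ⊓ LinearMap.range (P : H →ₗ[ℂ] H)) : ℤ)) := by
  have hP : IsStarProjection P := ⟨hPidem, hPsa⟩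
  have hQ : IsStarProjection (adjoint U * P * U) := by
    simpa only [star_eq_adjoint] using hP.star_mul_mul_s2 (by rwa [star_eq_adjoint])
  subst hΦ
  have hker_sub := hP.ker_sub_sub_one hQ
  have hker_add := hP.ker_sub_add_one hQ
  exact ⟨hker_sub, hker_add, fun _ _ => by rw [hker_sub, hker_add]⟩

/-- For a unitary `U`, an orthogonal projection `P`, and the flux
`Φ = U*PU − P`: `ker(Φ−1) = ker(Φ²−1) ∩ ker P` and `ker(Φ+1) = ker(Φ²−1) ∩ Ran P`;
consequently, when the eigenspaces are finite dimensional, the index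
`ind(Φ) = dim ker(Φ−1) − dim ker(Φ+1)` equals
`dim(ker(Φ²−1) ∩ ker P) − dim(ker(Φ²−1) ∩ Ran P)`. -/
theorem stmt_2 {H : Type*} [NormedAddCommGroup H] [InnerProductSpace ℂ H] [CompleteSpace H]
    (U P : H →L[ℂ] H)
    (hU1 : adjoint U * U = 1) (hU2 : U * adjoint U = 1)
    (hPsa : IsSelfAdjoint P) (hPidem : P * P = P)
    (Φ : H →L[ℂ] H) (hΦ : Φ = adjoint U * P * U - P) :
    LinearMap.ker ((Φ - 1 : H →L[ℂ] H) : H →ₗ[ℂ] H) = LinearMap.ker ((Φ ^ 2 - 1 : H →L[ℂ] H) : H →ₗ[ℂ] H) ⊓ LinearMap.ker (P : H →ₗ[ℂ] H) ∧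
    LinearMap.ker ((Φ + 1 : H →L[ℂ] H) : H →ₗ[ℂ] H) = LinearMap.ker ((Φ ^ 2 - 1 : H →L[ℂ] H) : H →ₗ[ℂ] H) ⊓ LinearMap.range (P : H →ₗ[ℂ] H) ∧
    (FiniteDimensional ℂ (LinearMap.ker ((Φ - 1 : H →L[ℂ] H) : H →ₗ[ℂ] H)) →
      FiniteDimensional ℂ (LinearMap.ker ((Φ + 1 : H →L[ℂ] H) : H →ₗ[ℂ] H)) →
      (Module.finrank ℂ (LinearMap.ker ((Φ - 1 : H →L[ℂ] H) : H →ₗ[ℂ] H)) : ℤ)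
          - (Module.finrank ℂ (LinearMap.ker ((Φ + 1 : H →L[ℂ] H) : H →ₗ[ℂ] H)) : ℤ)
        = (Module.finrank ℂ ↥(LinearMap.ker ((Φ ^ 2 - 1 : H →L[ℂ] H) : H →ₗ[ℂ] H) ⊓ LinearMap.ker (P : H →ₗ[ℂ] H)) : ℤ)
          - (Module.finrank ℂ ↥(LinearMap.ker ((Φ ^ 2 - 1 : H →L[ℂ] H) : H →ₗ[ℂ] H) ⊓ LinearMap.range (P : H →ₗ[ℂ] H)) : ℤ)) :=
  stmt_2_general U P hU2 hPsa hPidem Φ hΦ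
end

section
/- Let H be a complex Hilbert space, U : H → H unitary, P an orthogonal projection, and suppose Φ := U*PU − P has finite rank. Then ker(Φ − 1) and ker(Φ + 1) are finite-dimensional, and for every Hilbert (orthonormal) basis (e_i) of H the family ⟪e_i, (1 − 2P)Φ² e_i⟫ is summable with sum ∑_i ⟪e_i, (1 − 2P)Φ² e_i⟫ = dim ker(Φ − 1) − dim ker(Φ + 1); that is, the supertrace trace((P^⊥ − P)Φ²) equals the index ind(Φ). -/
/-!
With `Q = U*PU`, both `P` and `Q` are idempotent and `Φ = Q - P`. Two identities of a pair of
idempotents drive the proof: `(1 - 2P)Φ + Φ(1 - 2P) = 2Φ²`, and `B = P + Q - 1` anticommutes with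
`Φ` with `B² = 1 - Φ²`. The first shows that `(1 - 2P)Φ²` maps into the finite-dimensional space
`range Φ` and has diagonal entry `t³` at each unit eigenvector of `Φ` with eigenvalue `t`, so its
trace is the sum of the cubes of the eigenvalues of `Φ` on `range Φ`. The second makes `B` injective
from the `t`- to the `-t`-eigenspace whenever `t² ≠ 1`, so these contributions cancel in pairs and
only `dim ker(Φ - 1) - dim ker(Φ + 1)` survives.
-/

theorem IsIdempotentElem.mul_mul_of_mul_eq_one {M : Type*} [Monoid M] {p u v : M}
    (hp : IsIdempotentElem p) (huv : u * v = 1) : IsIdempotentElem (v * p * u) :=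
  calc v * p * u * (v * p * u) = v * (p * (u * v) * p) * u := by simp only [mul_assoc]
    _ = v * p * u := by rw [huv, mul_one, hp.eq, mul_assoc]

section Idempotent

variable {R : Type*} [Ring R] {P Q : R}

theorem IsIdempotentElem.anticommutator_one_sub_two_mul_sub (hP : IsIdempotentElem P)
    (hQ : IsIdempotentElem Q) :
    (1 - 2 * P) * (Q - P) + (Q - P) * (1 - 2 * P) = 2 * (Q - P) ^ 2 := by
  noncomm_ring
  simp only [hP.eq, hQ.eq]
  abel

theorem IsIdempotentElem.add_sub_one_mul_sub (hP : IsIdempotentElem P)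
    (hQ : IsIdempotentElem Q) :
    (P + Q - 1) * (Q - P) = -((Q - P) * (P + Q - 1)) := by
  noncomm_ring
  simp only [hP.eq, hQ.eq]
  abel

theorem IsIdempotentElem.add_sub_one_sq (hP : IsIdempotentElem P) (hQ : IsIdempotentElem Q) :
    (P + Q - 1) ^ 2 = 1 - (Q - P) ^ 2 := by
  noncomm_ring
  simp only [hP.eq, hQ.eq]
  abel

end Idempotent

open Module Module.End

section Eigenspace

variable {K M : Type*} [Field K] [AddCommGroup M] [Module K M]

theorem Module.End.eigenspace_le_range {f : End K M} {μ : K} (hμ : μ ≠ 0) :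
    eigenspace f μ ≤ LinearMap.range f := fun x hx =>
  ⟨μ⁻¹ • x, by rw [map_smul, mem_eigenspace_iff.mp hx, smul_smul, inv_mul_cancel₀ hμ, one_smul]⟩

theorem Module.End.finrank_eigenspace_restrict {f : End K M} {p : Submodule K M}
    (hfp : ∀ x ∈ p, f x ∈ p) {μ : K} (hμ : eigenspace f μ ≤ p) :
    finrank K (eigenspace (f.restrict hfp) μ) = finrank K (eigenspace f μ) := by
  rw [eigenspace, genEigenspace_restrict f p 1 μ hfp]
  exact (Submodule.comapSubtypeEquivOfLe hμ).finrank_eq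

theorem Module.End.finrank_eigenspace_le_neg {f g : End K M} (hgf : g * f = -(f * g))
    (hg : g ^ 2 = 1 - f ^ 2) {μ : K} (hμ : μ ^ 2 ≠ 1) [FiniteDimensional K (eigenspace f (-μ))] :
    finrank K (eigenspace f μ) ≤ finrank K (eigenspace f (-μ)) := by
  have hmaps : ∀ x ∈ eigenspace f μ, g x ∈ eigenspace f (-μ) := fun x hx => by
    rw [mem_eigenspace_iff] at hx ⊢
    have h := LinearMap.congr_fun hgf x
    rw [Module.End.mul_apply, hx, map_smul, LinearMap.neg_apply, Module.End.mul_apply] at h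
    rw [neg_smul, h, neg_neg]
  refine LinearMap.finrank_le_finrank_of_injective (f := g.restrict hmaps) ?_
  rw [← LinearMap.ker_eq_bot, eq_bot_iff]
  rintro ⟨x, hx⟩ hgx
  have hgx : g x = 0 := congrArg Subtype.val hgx
  have : (1 - μ ^ 2) • x = 0 := by
    have h := LinearMap.congr_fun hg x
    rw [sq, sq, Module.End.mul_apply, hgx, map_zero, LinearMap.sub_apply, Module.End.one_apply,
      Module.End.mul_apply, mem_eigenspace_iff.mp hx, map_smul, mem_eigenspace_iff.mp hx,
      smul_smul, ← sq] at h
    rw [sub_smul, one_smul, h]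
  simpa [sub_eq_zero, Ne.symm hμ] using this

theorem Module.End.finrank_eigenspace_neg {f g : End K M} (hgf : g * f = -(f * g))
    (hg : g ^ 2 = 1 - f ^ 2) {μ : K} (hμ : μ ^ 2 ≠ 1) [FiniteDimensional K (eigenspace f μ)]
    [FiniteDimensional K (eigenspace f (-μ))] :
    finrank K (eigenspace f (-μ)) = finrank K (eigenspace f μ) := by
  refine le_antisymm ?_ (finrank_eigenspace_le_neg hgf hg hμ)
  have : FiniteDimensional K (eigenspace f (- -μ)) := by rwa [neg_neg]
  have h := finrank_eigenspace_le_neg hgf hg (μ := -μ) (by rwa [neg_sq])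
  rwa [neg_neg] at h

theorem Module.End.finrank_eigenspace_sub_neg {P Q : End K M} (hP : IsIdempotentElem P)
    (hQ : IsIdempotentElem Q) {μ : K} (hμ : μ ^ 2 ≠ 1)
    [FiniteDimensional K (eigenspace (Q - P) μ)] [FiniteDimensional K (eigenspace (Q - P) (-μ))] :
    finrank K (eigenspace (Q - P) (-μ)) = finrank K (eigenspace (Q - P) μ) :=
  finrank_eigenspace_neg (hP.add_sub_one_mul_sub hQ) (hP.add_sub_one_sq hQ) hμ

end Eigenspace

open Finset

section OddSum

variable {ι α : Type*} [Fintype ι] [DecidableEq α] [InvolutiveNeg α]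

theorem Finset.sum_comp_eq_zero_of_odd (μ : ι → α) (φ : α → ℝ) (hφ : ∀ t, φ (-t) = -φ t)
    (hμ : ∀ t, φ t ≠ 0 → #{k | μ k = t} = #{k | μ k = -t}) :
    ∑ k, φ (μ k) = 0 := by
  set S : Finset α := univ.image μ ∪ univ.image (fun k => -μ k)
  have hS : ∀ t ∈ S, -t ∈ S := by
    intro t ht
    simp only [S, mem_union, mem_image, mem_univ, true_and] at ht ⊢
    rcases ht with ⟨k, rfl⟩ | ⟨k, rfl⟩
    · exact Or.inr ⟨k, rfl⟩
    · exact Or.inl ⟨k, (neg_neg _).symm⟩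
  have hfib : ∑ k, φ (μ k) = ∑ t ∈ S, #{k | μ k = t} • φ t := by
    rw [← sum_fiberwise_of_maps_to (g := μ) (t := S) (fun k _ => by simp [S])]
    refine sum_congr rfl fun t _ => ?_
    rw [← sum_const]
    exact sum_congr rfl fun k hk => by rw [(mem_filter.mp hk).2]
  have hodd : ∑ t ∈ S, #{k | μ k = t} • φ t = -∑ t ∈ S, #{k | μ k = t} • φ t := by
    rw [← sum_neg_distrib]
    refine sum_nbij' Neg.neg Neg.neg hS hS (fun t _ => neg_neg t) (fun t _ => neg_neg t) ?_
    intro t _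
    by_cases h : φ t = 0
    · simp [h, hφ]
    · rw [hμ t h, hφ, smul_neg, neg_neg]
  rw [hfib]
  linarith

theorem Finset.sum_pow_three_eq_card_sub_card (μ : ι → ℝ)
    (hμ : ∀ t, t ≠ 0 → t ^ 2 ≠ 1 → #{k | μ k = t} = #{k | μ k = -t}) :
    ∑ k, μ k ^ 3 = #{k | μ k = 1} - #{k | μ k = -1} := by
  set φ : ℝ → ℝ := fun t => if t ^ 2 = 1 then 0 else t ^ 3
  have hsplit : ∀ t : ℝ, t ^ 3 = φ t + ((if t = 1 then 1 else 0) - (if t = -1 then 1 else 0)) := by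
    intro t
    simp only [φ]
    split_ifs <;> grind
  have hφ_odd : ∀ t, φ (-t) = -φ t := fun t => by
    simp only [φ]
    split_ifs <;> grind
  have hφ : ∑ k, φ (μ k) = 0 := by
    refine sum_comp_eq_zero_of_odd μ φ hφ_odd fun t ht => ?_
    simp only [φ, ne_eq, ite_eq_left_iff, not_forall] at ht
    obtain ⟨ht1, hcube⟩ := ht
    exact hμ t (by rintro rfl; simp at hcube) ht1
  simp only [hsplit, sum_add_distrib, sum_sub_distrib, hφ, sum_boole, zero_add]

end OddSum

open ContinuousLinearMap

section InnerProduct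

variable {𝕜 E : Type*} [RCLike 𝕜] [NormedAddCommGroup E] [InnerProductSpace 𝕜 E]
  [CompleteSpace E]

local notation "⟪" x ", " y "⟫" => @inner 𝕜 _ _ x y

theorem inner_mul_sq_apply_eq_pow_three_mul {A Φ : E →L[𝕜] E} (hΦ : IsSelfAdjoint Φ)
    (hAΦ : A * Φ + Φ * A = 2 * Φ ^ 2) {t : ℝ} {x : E} (hx : Φ x = (t : 𝕜) • x) :
    ⟪x, (A * Φ ^ 2) x⟫ = t ^ 3 * ⟪x, x⟫ := by
  have hΦA : ⟪x, Φ (A x)⟫ = t * ⟪x, A x⟫ := by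
    rw [← adjoint_inner_left, hΦ.adjoint_eq, hx, inner_smul_left, RCLike.conj_ofReal]
  have hA : (t : 𝕜) * ⟪x, A x⟫ = t ^ 2 * ⟪x, x⟫ := by
    have h := congrArg (fun S : E →L[𝕜] E => ⟪x, S x⟫) hAΦ
    simp only [add_apply, mul_apply_eq_comp, sq, two_mul, hx, map_smul, inner_add_right,
      inner_smul_right, hΦA] at h
    linear_combination h / 2
  calc ⟪x, (A * Φ ^ 2) x⟫ = t * (t * ⟪x, A x⟫) := by
        rw [sq, mul_apply_eq_comp, mul_apply_eq_comp, hx, map_smul, hx, smul_smul, map_smul,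
          inner_smul_right]
        ring
    _ = t ^ 3 * ⟪x, x⟫ := by rw [hA]; ring

theorem HilbertBasis.hasSum_inner_apply_of_forall_mem {ι κ : Type*} [Fintype κ]
    (e : HilbertBasis ι 𝕜 E) (T : E →L[𝕜] E) {V : Submodule 𝕜 E} (hT : ∀ x, T x ∈ V)
    (v : OrthonormalBasis κ 𝕜 V) :
    HasSum (fun i => ⟪e i, T (e i)⟫) (∑ k, ⟪(v k : E), T (v k)⟫) := by
  have hexpand : ∀ x, ⟪x, T x⟫ = ∑ k, ⟪(v k : E), T x⟫ * ⟪x, v k⟫ := by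
    intro x
    have h : T x = ∑ k, ⟪(v k : E), T x⟫ • (v k : E) := by
      simpa using (congrArg Subtype.val (v.sum_repr' ⟨T x, hT x⟩)).symm
    conv_lhs => rw [h]
    simp only [inner_sum, inner_smul_right]
  have hcoord : ∀ k, HasSum (fun i => ⟪(v k : E), T (e i)⟫ * ⟪e i, v k⟫) ⟪(v k : E), T (v k)⟫ :=
    fun k => by
      simpa only [adjoint_inner_left] using e.hasSum_inner_mul_inner (adjoint T (v k)) (v k)
  convert hasSum_sum fun k _ => hcoord k using 1
  exact funext fun i => hexpand (e i)

theorem HilbertBasis.hasSum_inner_mul_sq_apply {ι : Type*} (e : HilbertBasis ι 𝕜 E)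
    {A Φ : E →L[𝕜] E} (hΦ : IsSelfAdjoint Φ)
    [FiniteDimensional 𝕜 (LinearMap.range (Φ : E →ₗ[𝕜] E))] (hAΦ : A * Φ + Φ * A = 2 * Φ ^ 2)
    (hsymm : ∀ t : ℝ, t ≠ 0 → t ^ 2 ≠ 1 → finrank 𝕜 (eigenspace (Φ : E →ₗ[𝕜] E) (-t : 𝕜)) =
      finrank 𝕜 (eigenspace (Φ : E →ₗ[𝕜] E) (t : 𝕜))) :
    HasSum (fun i => ⟪e i, (A * Φ ^ 2) (e i)⟫)
      (finrank 𝕜 (eigenspace (Φ : E →ₗ[𝕜] E) 1) - finrank 𝕜 (eigenspace (Φ : E →ₗ[𝕜] E) (-1))) := by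
  set f : End 𝕜 E := (Φ : E →ₗ[𝕜] E)
  set V := LinearMap.range f
  have hfV : ∀ x ∈ V, f x ∈ V := fun x _ => LinearMap.mem_range_self f x
  have hc : (f.restrict hfV).IsSymmetric := fun x y => hΦ.isSymmetric x y
  set μ := hc.eigenvalues rfl
  set u := hc.eigenvectorBasis rfl
  have hcount : ∀ t : ℝ, t ≠ 0 → #{k | μ k = t} = finrank 𝕜 (eigenspace f t) := by
    intro t ht
    rw [← finrank_eigenspace_restrict hfV (eigenspace_le_range (by exact_mod_cast ht)),
      ← hc.card_filter_eigenvalues_eq rfl]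
    simp only [RCLike.ofReal_inj, μ]
  have hT : ∀ x, (A * Φ ^ 2) x ∈ V := by
    have h : A * Φ ^ 2 = Φ * (2 * Φ ^ 2 - A * Φ) :=
      calc A * Φ ^ 2 = (A * Φ + Φ * A) * Φ - Φ * (A * Φ) := by noncomm_ring
        _ = Φ * (2 * Φ ^ 2 - A * Φ) := by rw [hAΦ]; noncomm_ring
    intro x
    rw [h]
    exact LinearMap.mem_range_self f _
  have hdiag : ∀ k, ⟪(u k : E), (A * Φ ^ 2) (u k)⟫ = μ k ^ 3 := by
    intro k
    have hu : Φ (u k) = (μ k : 𝕜) • (u k : E) :=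
      congrArg Subtype.val (hc.apply_eigenvectorBasis rfl k)
    rw [inner_mul_sq_apply_eq_pow_three_mul hΦ hAΦ hu,
      ← Submodule.coe_inner, inner_self_eq_norm_sq_to_K, u.orthonormal.1 k]
    simp
  convert e.hasSum_inner_apply_of_forall_mem _ hT u using 1
  have hsum := Finset.sum_pow_three_eq_card_sub_card μ fun t ht ht1 => by
    rw [hcount t ht, hcount (-t) (neg_ne_zero.mpr ht), RCLike.ofReal_neg, hsymm t ht ht1]
  rw [hcount 1 one_ne_zero, hcount (-1) (by norm_num), RCLike.ofReal_neg, RCLike.ofReal_one] at hsum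
  rw [Finset.sum_congr rfl fun k _ => hdiag k]
  exact_mod_cast (congrArg ((↑) : ℝ → 𝕜) hsum).symm

end InnerProduct

theorem stmt_3_general {H : Type*} [NormedAddCommGroup H] [InnerProductSpace ℂ H] [CompleteSpace H]
    (U P : H →L[ℂ] H)
    (hU2 : U * adjoint U = 1)
    (hPsa : IsSelfAdjoint P) (hPidem : P * P = P)
    (Φ : H →L[ℂ] H) (hΦ : Φ = adjoint U * P * U - P)
    (hfin : FiniteDimensional ℂ (LinearMap.range (Φ : H →ₗ[ℂ] H))) :
    FiniteDimensional ℂ (LinearMap.ker ((Φ - 1 : H →L[ℂ] H) : H →ₗ[ℂ] H)) ∧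
    FiniteDimensional ℂ (LinearMap.ker ((Φ + 1 : H →L[ℂ] H) : H →ₗ[ℂ] H)) ∧
    ∀ (ι : Type*) (e : HilbertBasis ι ℂ H),
      HasSum (fun i => @inner ℂ _ _ (e i) ((((1 - (2 : ℂ) • P) * Φ ^ 2 : H →L[ℂ] H)) (e i)))
        (((Module.finrank ℂ (LinearMap.ker ((Φ - 1 : H →L[ℂ] H) : H →ₗ[ℂ] H)) : ℤ)
          - (Module.finrank ℂ (LinearMap.ker ((Φ + 1 : H →L[ℂ] H) : H →ₗ[ℂ] H)) : ℤ) : ℤ) : ℂ) := by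
  set Q : H →L[ℂ] H := adjoint U * P * U
  have hP : IsIdempotentElem P := hPidem
  have hQ : IsIdempotentElem Q := hP.mul_mul_of_mul_eq_one hU2
  have hQsa : IsSelfAdjoint Q := by simpa only [star_eq_adjoint] using hPsa.conjugate' U
  have hΦsa : IsSelfAdjoint Φ := hΦ ▸ hQsa.sub hPsa
  set f : End ℂ H := (Φ : H →ₗ[ℂ] H)
  have hf : f = (Q : End ℂ H) - P := by simp only [f, hΦ]; rfl
  have hker₁ : LinearMap.ker ((Φ - 1 : H →L[ℂ] H) : H →ₗ[ℂ] H) = eigenspace f 1 := by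
    rw [eigenspace_def, one_smul]; rfl
  have hker₂ : LinearMap.ker ((Φ + 1 : H →L[ℂ] H) : H →ₗ[ℂ] H) = eigenspace f (-1) := by
    rw [eigenspace_def, neg_smul, one_smul, sub_neg_eq_add]; rfl
  have hfinite : ∀ μ : ℂ, μ ≠ 0 → FiniteDimensional ℂ (eigenspace f μ) := fun μ hμ =>
    Submodule.finiteDimensional_of_le (eigenspace_le_range hμ)
  refine ⟨hker₁ ▸ hfinite 1 one_ne_zero, hker₂ ▸ hfinite (-1) (by norm_num), fun ι e => ?_⟩
  have hsymm : ∀ t : ℝ, t ≠ 0 → t ^ 2 ≠ 1 →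
      finrank ℂ (eigenspace f (-t : ℂ)) = finrank ℂ (eigenspace f (t : ℂ)) := by
    intro t ht ht1
    have h₁ := hfinite t (by exact_mod_cast ht)
    have h₂ := hfinite (-t) (by exact_mod_cast neg_ne_zero.mpr ht)
    have hP' : IsIdempotentElem (P : End ℂ H) := hP.map toLinearMapRingHom
    have hQ' : IsIdempotentElem (Q : End ℂ H) := hQ.map toLinearMapRingHom
    rw [hf] at h₁ h₂ ⊢
    exact finrank_eigenspace_sub_neg hP' hQ' (by exact_mod_cast ht1)
  have hAΦ : (1 - 2 * P) * Φ + Φ * (1 - 2 * P) = 2 * Φ ^ 2 := by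
    rw [hΦ]
    exact hP.anticommutator_one_sub_two_mul_sub hQ
  rw [two_smul, ← two_mul, hker₁, hker₂]
  push_cast
  exact e.hasSum_inner_mul_sq_apply (A := 1 - 2 * P) hΦsa hAΦ hsymm

/-- If the flux `Φ = U*PU − P` of a unitary `U` through an orthogonal
projection `P` has finite rank, then `ker(Φ−1)` and `ker(Φ+1)` are finite dimensional, and for
every Hilbert basis `(e i)` of `H` the supertrace `trace((P⊥ − P)Φ²) = ∑ᵢ ⟪eᵢ, (1−2P)Φ² eᵢ⟫`
converges to the index `ind(Φ) = dim ker(Φ−1) − dim ker(Φ+1)`. -/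
theorem stmt_3 {H : Type*} [NormedAddCommGroup H] [InnerProductSpace ℂ H] [CompleteSpace H]
    (U P : H →L[ℂ] H)
    (hU1 : adjoint U * U = 1) (hU2 : U * adjoint U = 1)
    (hPsa : IsSelfAdjoint P) (hPidem : P * P = P)
    (Φ : H →L[ℂ] H) (hΦ : Φ = adjoint U * P * U - P)
    (hfin : FiniteDimensional ℂ (LinearMap.range (Φ : H →ₗ[ℂ] H))) :
    FiniteDimensional ℂ (LinearMap.ker ((Φ - 1 : H →L[ℂ] H) : H →ₗ[ℂ] H)) ∧
    FiniteDimensional ℂ (LinearMap.ker ((Φ + 1 : H →L[ℂ] H) : H →ₗ[ℂ] H)) ∧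
    ∀ (ι : Type*) (e : HilbertBasis ι ℂ H),
      HasSum (fun i => @inner ℂ _ _ (e i) ((((1 - (2 : ℂ) • P) * Φ ^ 2 : H →L[ℂ] H)) (e i)))
        (((Module.finrank ℂ (LinearMap.ker ((Φ - 1 : H →L[ℂ] H) : H →ₗ[ℂ] H)) : ℤ)
          - (Module.finrank ℂ (LinearMap.ker ((Φ + 1 : H →L[ℂ] H) : H →ₗ[ℂ] H)) : ℤ) : ℤ) : ℂ) :=
  stmt_3_general U P hU2 hPsa hPidem Φ hΦ hfin
end

section
/- Let H be a complex Hilbert space, U : H → H unitary, P an orthogonal projection, Φ := U*PU − P, R := U*PU and W := (1−R)(1−P) + RP. Then: (i) PUP + (1−P)U(1−P) = U(1 − Φ² − (PΦ − ΦP)); (ii) UW = PUP + (1−P)U(1−P); (iii) W*W = 1 − Φ²; (iv) W commutes with Φ². -/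
open ContinuousLinearMap

/-- For a unitary `U`, orthogonal projection `P`, flux `Φ = U*PU − P`,
`R = U*PU` and `W = (1−R)(1−P) + RP`:
(i) `PUP + (1−P)U(1−P) = U(1 − Φ² − [P,Φ])`;
(ii) `UW = PUP + (1−P)U(1−P)`;
(iii) `W*W = 1 − Φ²`;
(iv) `W` commutes with `Φ²`. -/
theorem stmt_4 {H : Type*} [NormedAddCommGroup H] [InnerProductSpace ℂ H] [CompleteSpace H]
    (U P : H →L[ℂ] H)
    (hU1 : adjoint U * U = 1) (hU2 : U * adjoint U = 1)
    (hPsa : IsSelfAdjoint P) (hPidem : P * P = P)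
    (Φ R W : H →L[ℂ] H)
    (hR : R = adjoint U * P * U)
    (hΦ : Φ = R - P)
    (hW : W = (1 - R) * (1 - P) + R * P) :
    P * U * P + (1 - P) * U * (1 - P) = U * (1 - Φ ^ 2 - (P * Φ - Φ * P)) ∧
    U * W = P * U * P + (1 - P) * U * (1 - P) ∧
    adjoint W * W = 1 - Φ ^ 2 ∧
    Commute W (Φ ^ 2) := by
  have hRsa : star R = R := by
    rw [hR]
    simp [star_mul, star_eq_adjoint, adjoint_adjoint, hPsa.adjoint_eq, mul_assoc]
  have hP' : ∀ x : H →L[ℂ] H, P * (P * x) = P * x := fun x => by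
    rw [← mul_assoc, hPidem]
  have hRidem : R * R = R := by
    rw [hR]
    calc adjoint U * P * U * (adjoint U * P * U)
        = adjoint U * (P * ((U * adjoint U) * (P * U))) := by noncomm_ring
      _ = adjoint U * P * U := by rw [hU2, one_mul, hP', ← mul_assoc]
  have hUR : U * R = P * U := by
    rw [hR]
    calc U * (adjoint U * P * U) = (U * adjoint U) * (P * U) := by noncomm_ring
      _ = P * U := by rw [hU2, one_mul]
  have hR' : ∀ x : H →L[ℂ] H, R * (R * x) = R * x := fun x => by
    rw [← mul_assoc, hRidem]
  have hUR' : ∀ x : H →L[ℂ] H, U * (R * x) = P * (U * x) := fun x => by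
    rw [← mul_assoc, hUR, mul_assoc]
  have hWadj : adjoint W = (1 - P) * (1 - R) + P * R := by
    rw [hW, ← star_eq_adjoint]
    simp [star_mul, hPsa.star_eq, hRsa]
  refine ⟨?_, ?_, ?_, ?_⟩
  · rw [hΦ]
    simp only [pow_two, mul_sub, sub_mul, mul_add, add_mul, mul_one, one_mul, mul_assoc]
    simp only [hR', hP', hUR', hUR, hRidem, hPidem]
    abel
  · rw [hW]
    simp only [mul_sub, sub_mul, mul_add, add_mul, mul_one, one_mul, mul_assoc]
    simp only [hR', hP', hUR', hUR, hRidem, hPidem]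
    abel
  · rw [hWadj, hW, hΦ]
    simp only [pow_two, mul_sub, sub_mul, mul_add, add_mul, mul_one, one_mul, mul_assoc]
    simp only [hR', hP', hUR', hUR, hRidem, hPidem]
    abel
  · show W * Φ ^ 2 = Φ ^ 2 * W
    rw [hW, hΦ]
    simp only [pow_two, mul_sub, sub_mul, mul_add, add_mul, mul_one, one_mul, mul_assoc]
    simp only [hR', hP', hUR', hUR, hRidem, hPidem]
    abel
end

section
/- Let H be a complex Hilbert space, P an orthogonal projection on H, and let t ↦ U(t), t ∈ [0,1], be a family of unitary operators on H that is continuous in operator norm. Suppose Φ(t) := U(t)*PU(t) − P is compact for every t ∈ [0,1]. Then ker(Φ(t) − 1) and ker(Φ(t) + 1) are finite-dimensional for each t, and the integer-valued index t ↦ ind(Φ(t)) := dim ker(Φ(t) − 1) − dim ker(Φ(t) + 1) is constant on [0,1]. -/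
/-!
The flux `Φ = U† P U - P` is a difference of two orthogonal projections, so
`ker (Φ + 1) = ran P ∩ ker (U† P U)` and `ker (Φ - 1) = ker P ∩ ran (U† P U)`. The first is the
kernel of `A = P U P + (1 - P)`, and `U` maps the second onto the kernel of `A†`. Since
`A† A - 1 = P Φ P` is compact, `A` has closed range, so `ind Φ = dim ker A† - dim ker A` is minus
the Fredholm index of `A`.

The Fredholm index is locally constant: bordering `A` by a projection onto its kernel and by a
complement of its range yields an invertible operator, invertibility survives small
perturbations, and invertibility of the bordered operator pins down the index. Since
`t ↦ A t` is norm continuous and `[0, 1]` is connected, the index is constant.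
-/

open ContinuousLinearMap Function Module Submodule Filter Topology
open scoped InnerProduct InnerProductSpace

namespace LinearMap

variable {K M N E F : Type*} [DivisionRing K] [AddCommGroup M] [Module K M]
  [AddCommGroup N] [Module K N] [AddCommGroup E] [Module K E] [AddCommGroup F] [Module K F]

def bordered (f : M →ₗ[K] N) (π : M →ₗ[K] E) (j : F →ₗ[K] N) : M × F →ₗ[K] N × E :=
  (f ∘ₗ LinearMap.fst K M F + j ∘ₗ LinearMap.snd K M F).prod (π ∘ₗ LinearMap.fst K M F)

@[simp]
lemma bordered_apply (f : M →ₗ[K] N) (π : M →ₗ[K] E) (j : F →ₗ[K] N) (z : M × F) :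
    f.bordered π j z = (f z.1 + j z.2, π z.1) := rfl

theorem bijective_bordered_of_isCompl {f : M →ₗ[K] N} {π : M →ₗ[K] ker f}
    (hπ : ∀ x : ker f, π x = x) {C : Submodule K N} (hC : IsCompl (range f) C) :
    Bijective (f.bordered π C.subtype) := by
  constructor
  · rw [← ker_eq_bot, eq_bot_iff]
    rintro ⟨x, v⟩ hxv
    obtain ⟨hxv, hπx⟩ : f x + v = 0 ∧ π x = 0 := by simpa using hxv
    have hv : (v : N) = 0 := disjoint_iff_inf_le.mp hC.disjoint
      ⟨⟨-x, by rw [map_neg, neg_eq_of_add_eq_zero_right hxv]⟩, v.2⟩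
    have hx : x ∈ ker f := by simpa [hv] using hxv
    have hx0 : x = 0 := congrArg Subtype.val ((hπ ⟨x, hx⟩).symm.trans hπx)
    rw [Submodule.mem_bot, Prod.mk_eq_zero]
    exact ⟨hx0, Subtype.ext hv⟩
  · rintro ⟨y, e⟩
    obtain ⟨_, ⟨x₀, rfl⟩, v, hv, hy⟩ := mem_sup.mp (hC.sup_eq_top ▸ mem_top (x := y))
    refine ⟨(x₀ - π x₀ + e, ⟨v, hv⟩), ?_⟩
    simp [hy, hπ]

theorem finrank_eq_finrank_quotient_range_add_finrank_comap [FiniteDimensional K F]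
    {f : M →ₗ[K] N} {j : F →ₗ[K] N} (hfj : range f ⊔ range j = ⊤) :
    finrank K F = finrank K (N ⧸ range f) + finrank K ((range f).comap j) := by
  have hψ : range ((range f).mkQ ∘ₗ j) = ⊤ := by rwa [range_comp, map_mkQ_eq_top]
  rw [← finrank_range_add_finrank_ker ((range f).mkQ ∘ₗ j), hψ, finrank_top, ker_comp, ker_mkQ]

theorem finrank_eq_finrank_ker_add_finrank_comap [FiniteDimensional K E] {f : M →ₗ[K] N}
    {π : M →ₗ[K] E} {j : F →ₗ[K] N} (h : Bijective (f.bordered π j)) :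
    finrank K E = finrank K (ker f) + finrank K ((range f).comap j) := by
  let e := LinearEquiv.ofBijective _ h
  have he : ∀ z, f.bordered π j z = e z := fun _ => rfl
  -- `φ ε` is the `F`-component of the solution of `f x + j v = 0`, `π x = ε`.
  let φ : E →ₗ[K] F := LinearMap.snd K M F ∘ₗ e.symm.toLinearMap ∘ₗ LinearMap.inr K N E
  have hsol : ∀ ε, f (e.symm (0, ε)).1 + j (φ ε) = 0 ∧ π (e.symm (0, ε)).1 = ε := fun ε => by
    have := e.apply_symm_apply (0, ε)
    rwa [← he, bordered_apply, Prod.mk.injEq] at this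
  have hsolve : ∀ x v, f x + j v = 0 → e.symm (0, π x) = (x, v) := fun x v hxv => by
    rw [e.symm_apply_eq, ← he, bordered_apply, hxv]
  have hker : range (π ∘ₗ (ker f).subtype) = ker φ := by
    ext ε
    constructor
    · rintro ⟨⟨x, hx⟩, rfl⟩
      simp [φ, hsolve x 0 (by simpa using hx)]
    · intro hε
      refine ⟨⟨_, ?_⟩, (hsol ε).2⟩
      simpa [show φ ε = 0 from hε] using (hsol ε).1
  have hπ : Injective (π ∘ₗ (ker f).subtype) := by
    rintro ⟨x, hx⟩ ⟨x', hx'⟩ hxx'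
    have := (hsolve x 0 (by simpa using hx)).symm.trans
      ((congrArg (fun ε => e.symm (0, ε)) hxx').trans (hsolve x' 0 (by simpa using hx')))
    simpa using congrArg Prod.fst this
  have hrange : range φ = (range f).comap j := by
    ext v
    constructor
    · rintro ⟨ε, rfl⟩
      exact ⟨-(e.symm (0, ε)).1, by simp [eq_neg_of_add_eq_zero_right (hsol ε).1]⟩
    · rintro ⟨x, hx⟩
      refine ⟨π (-x), ?_⟩
      change (e.symm (0, π (-x))).2 = v
      rw [hsolve (-x) v (by simp [hx])]
  rw [← finrank_range_add_finrank_ker φ, hrange, ← hker, finrank_range_of_inj hπ, add_comm]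

theorem index_eq_of_bijective_bordered [FiniteDimensional K E] [FiniteDimensional K F]
    {f : M →ₗ[K] N} {π : M →ₗ[K] E} {j : F →ₗ[K] N} (h : Bijective (f.bordered π j)) :
    f.index = finrank K E - finrank K F := by
  have hfj : range f ⊔ range j = ⊤ := eq_top_iff.mpr fun y _ => by
    obtain ⟨⟨x, v⟩, hxv⟩ := h.surjective (y, 0)
    simp only [bordered_apply, Prod.mk.injEq] at hxv
    exact hxv.1 ▸ add_mem_sup (mem_range_self f x) (mem_range_self j v)
  rw [index_eq_finrank_sub, finrank_eq_finrank_ker_add_finrank_comap h,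
    finrank_eq_finrank_quotient_range_add_finrank_comap hfj]
  push_cast
  ring

end LinearMap

namespace ContinuousLinearMap

variable {𝕜 X Y E F : Type*} [NontriviallyNormedField 𝕜] [NormedAddCommGroup X] [NormedSpace 𝕜 X]
  [NormedAddCommGroup Y] [NormedSpace 𝕜 Y] [NormedAddCommGroup E] [NormedSpace 𝕜 E]
  [NormedAddCommGroup F] [NormedSpace 𝕜 F]

def bordered (f : X →L[𝕜] Y) (π : X →L[𝕜] E) (j : F →L[𝕜] Y) : X × F →L[𝕜] Y × E :=
  (f ∘L fst 𝕜 X F + j ∘L snd 𝕜 X F).prod (π ∘L fst 𝕜 X F)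

lemma continuous_bordered (π : X →L[𝕜] E) (j : F →L[𝕜] Y) :
    Continuous fun f : X →L[𝕜] Y => f.bordered π j := by
  have hfst : Continuous fun f : X →L[𝕜] Y => f ∘L fst 𝕜 X F + j ∘L snd 𝕜 X F := by fun_prop
  exact (prodₗᵢ 𝕜).continuous.comp (hfst.prodMk continuous_const)

theorem eventually_index_eq [IsRCLikeNormedField 𝕜] [CompleteSpace 𝕜] [CompleteSpace X]
    [CompleteSpace Y] (A : X →L[𝕜] Y) [FiniteDimensional 𝕜 A.ker]
    [FiniteDimensional 𝕜 (Y ⧸ A.range)] :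
    ∀ᶠ B : X →L[𝕜] Y in 𝓝 A, (B : X →ₗ[𝕜] Y).index = (A : X →ₗ[𝕜] Y).index := by
  obtain ⟨π, hπ⟩ := Submodule.ClosedComplemented.of_finiteDimensional A.ker
  obtain ⟨C, hC⟩ := Submodule.exists_isCompl A.range
  have : FiniteDimensional 𝕜 C := (quotientEquivOfIsCompl _ _ hC).finiteDimensional
  have : CompleteSpace C := FiniteDimensional.complete 𝕜 C
  have hA : Bijective (A.bordered π C.subtypeL) :=
    LinearMap.bijective_bordered_of_isCompl hπ hC
  have hopen := ContinuousLinearEquiv.isOpen.preimage (continuous_bordered π C.subtypeL)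
  filter_upwards [hopen.mem_nhds (x := A) ⟨.ofBijective (A.bordered π C.subtypeL)
    (LinearMap.ker_eq_bot.mpr hA.1) (LinearMap.range_eq_top.mpr hA.2), rfl⟩] with B ⟨e, he⟩
  have hB : Bijective (B.bordered π C.subtypeL) := by
    rw [← show (e : X × C →L[𝕜] Y × A.ker) = B.bordered π C.subtypeL from he]
    exact e.bijective
  rw [LinearMap.index_eq_of_bijective_bordered (π := (π : X →ₗ[𝕜] A.ker)) hB,
    LinearMap.index_eq_of_bijective_bordered hA]

end ContinuousLinearMap

section CompactEigenspaces

variable {𝕜 E : Type*} [RCLike 𝕜] [NormedAddCommGroup E] [InnerProductSpace 𝕜 E] [CompleteSpace E]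
  {T : E →L[𝕜] E}

theorem IsCompactOperator.finiteDimensional_ker_sub_one (hT : IsCompactOperator T) :
    FiniteDimensional 𝕜 (T - 1).ker := by
  have h : (T - 1).ker = End.eigenspace (T : E →ₗ[𝕜] E) 1 := by
    ext; simp [sub_eq_zero]
  exact h ▸ ContinuousLinearMap.finite_dimensional_eigenspace hT 1 one_ne_zero

theorem IsCompactOperator.finiteDimensional_ker_add_one (hT : IsCompactOperator T) :
    FiniteDimensional 𝕜 (T + 1).ker := by
  have h : (T + 1).ker = End.eigenspace (T : E →ₗ[𝕜] E) (-1) := by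
    ext; simp [add_eq_zero_iff_eq_neg]
  exact h ▸ ContinuousLinearMap.finite_dimensional_eigenspace hT (-1) (neg_ne_zero.mpr one_ne_zero)

end CompactEigenspaces

namespace ContinuousLinearMap

variable {𝕜 E F : Type*} [RCLike 𝕜] [NormedAddCommGroup E] [InnerProductSpace 𝕜 E] [CompleteSpace E]
  [NormedAddCommGroup F] [InnerProductSpace 𝕜 F] [CompleteSpace F]

-- On `(ker A)ᗮ`, `A† A = 1 + K` with `K` compact and without eigenvalue `-1`, so it is bounded
-- below there by the Fredholm alternative.
theorem antilipschitz_comp_subtypeL_orthogonal_ker {A : E →L[𝕜] F}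
    (hK : IsCompactOperator (A† ∘L A - 1 : E →L[𝕜] E)) :
    ∃ C, AntilipschitzWith C (A ∘L A.kerᗮ.subtypeL) := by
  have hV : ∀ v ∈ A.kerᗮ, (A† ∘L A - 1) v ∈ A.kerᗮ := fun v hv => by
    refine sub_mem ?_ hv
    rw [orthogonal_ker]
    exact le_topologicalClosure _ ⟨A v, rfl⟩
  let KV : A.kerᗮ →L[𝕜] A.kerᗮ :=
    ((A† ∘L A - 1) ∘L A.kerᗮ.subtypeL).codRestrict _ fun v => by simpa using hV v v.2
  have hKV : IsCompactOperator KV :=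
    (hK.comp_clm A.kerᗮ.subtypeL).codRestrict _ (isClosed_orthogonal _)
  have hno : ¬ Module.End.HasEigenvalue (KV : Module.End 𝕜 A.kerᗮ) (-1) := fun h => by
    obtain ⟨v, hv⟩ := h.exists_hasEigenvector
    have hKv : (v : E) ∈ (A† ∘L A).ker := by
      simpa [KV, add_eq_zero_iff_eq_neg] using congrArg Subtype.val hv.apply_eq_smul
    rw [ker_adjoint_comp_self] at hKv
    exact hv.2 (Subtype.ext (inner_self_eq_zero.mp (v.2 v hKv)))
  obtain ⟨C, hC⟩ := hKV.antilipschitz_of_not_hasEigenvalue (neg_ne_zero.mpr one_ne_zero) hno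
  refine ⟨C * ‖A†‖₊, (A ∘L A.kerᗮ.subtypeL).antilipschitz_of_bound fun v => ?_⟩
  calc ‖v‖ ≤ C * ‖(KV - (-1 : 𝕜) • 1) v‖ := by simpa using hC.le_mul_dist v 0
    _ = C * ‖adjoint A (A v)‖ := by simp [KV]
    _ ≤ C * (‖A†‖ * ‖A v‖) := by gcongr; exact le_opNorm _ _
    _ = (C * ‖A†‖₊ : NNReal) * ‖A v‖ := by push_cast; ring

theorem isClosed_range_of_isCompactOperator_adjoint_comp_self_sub_one {A : E →L[𝕜] F}
    (hK : IsCompactOperator (A† ∘L A - 1 : E →L[𝕜] E)) : IsClosed (A.range : Set F) := by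
  obtain ⟨C, hC⟩ := antilipschitz_comp_subtypeL_orthogonal_ker hK
  have : CompleteSpace A.kerᗮ := (isClosed_orthogonal _).completeSpace_coe
  have hrange : Set.range (A ∘L A.kerᗮ.subtypeL) = A.range := by
    ext y
    refine ⟨fun ⟨v, hv⟩ => ⟨v, hv⟩, fun ⟨x, hx⟩ =>
      ⟨⟨_, A.ker.sub_starProjection_mem_orthogonal x⟩, ?_⟩⟩
    rw [← hx, coe_comp, Function.comp_apply, subtypeL_apply, map_sub,
      show A (A.ker.starProjection x) = 0 from A.ker.starProjection_apply_mem x, sub_zero, coe_coe]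
  exact hrange ▸ hC.isClosed_range (A ∘L A.kerᗮ.subtypeL).uniformContinuous

theorem nonempty_quotient_range_equiv_ker_adjoint {A : E →L[𝕜] F}
    (hA : IsClosed (A.range : Set F)) : Nonempty ((F ⧸ A.range) ≃ₗ[𝕜] A†.ker) := by
  have : CompleteSpace A.range := hA.completeSpace_coe
  rw [← orthogonal_range]
  exact ⟨quotientEquivOfIsCompl _ _ (isCompl_orthogonal _)⟩

end ContinuousLinearMap

theorem IsStarProjection.conjugate' {R : Type*} [Ring R] [StarRing R] {p : R}
    (hp : IsStarProjection p) {u : R} (hu : u * star u = 1) :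
    IsStarProjection (star u * p * u) where
  isIdempotentElem := by
    rw [IsIdempotentElem,
      show star u * p * u * (star u * p * u) = star u * (p * (u * star u) * p) * u by noncomm_ring,
      hu, mul_one, hp.isIdempotentElem.eq]
  isSelfAdjoint := hp.isSelfAdjoint.conjugate' u

/-! The compression of `u` to the range of a projection `p` is `p * u * p + (1 - p)`. -/

theorem IsIdempotentElem.compression_mul_compression {R : Type*} [Ring R] {p : R}
    (hp : IsIdempotentElem p) (u v : R) :
    (p * v * p + (1 - p)) * (p * u * p + (1 - p)) = 1 + p * (v * p * u - p) * p := by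
  have lhs : (p * v * p + (1 - p)) * (p * u * p + (1 - p)) = p * v * (p * p) * u * p
      + p * v * (p * (1 - p)) + ((1 - p) * p) * u * p + (1 - p) * (1 - p) := by noncomm_ring
  have rhs : 1 + p * (v * p * u - p) * p = 1 + p * v * p * u * p - (p * p) * p := by noncomm_ring
  rw [lhs, rhs, hp.eq, hp.eq, hp.mul_one_sub_self, hp.one_sub_mul_self, hp.one_sub.eq]
  noncomm_ring

theorem IsIdempotentElem.mem_ker_compression_iff {𝕜 E : Type*} [NontriviallyNormedField 𝕜]
    [NormedAddCommGroup E] [NormedSpace 𝕜 E] {P : E →L[𝕜] E} (hP : IsIdempotentElem P)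
    (W : E →L[𝕜] E) (x : E) : x ∈ (P * W * P + (1 - P)).ker ↔ P x = x ∧ P (W x) = 0 := by
  have hPP : ∀ y, P (P y) = P y := fun y => congr($(hP.eq) y)
  rw [LinearMap.mem_ker, coe_coe]
  simp only [add_apply, mul_apply_eq_comp, sub_apply, one_apply_eq_self]
  constructor
  · intro h
    have hPx : P (W (P x)) = 0 := by simpa [hPP] using congr(P $h)
    have hx : P x = x := by rw [hPx, zero_add, sub_eq_zero] at h; exact h.symm
    exact ⟨hx, hx ▸ hPx⟩
  · rintro ⟨hx, hWx⟩
    rw [hx, hWx, sub_self, add_zero]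

section Compression

variable {𝕜 H : Type*} [RCLike 𝕜] [NormedAddCommGroup H] [InnerProductSpace 𝕜 H] [CompleteSpace H]

theorem IsStarProjection.re_inner_apply_self_s8 {p : H →L[𝕜] H} (hp : IsStarProjection p) (x : H) :
    RCLike.re ⟪p x, x⟫_𝕜 = ‖p x‖ ^ 2 := by
  have hpp : p (p x) = p x := congr($(hp.isIdempotentElem.eq) x)
  nth_rw 1 [← hpp]
  rw [← adjoint_inner_right, hp.isSelfAdjoint.adjoint_eq, inner_self_eq_norm_sq]

theorem IsStarProjection.sub_apply_eq_self_iff_s8 {p q : H →L[𝕜] H} (hp : IsStarProjection p)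
    (hq : IsStarProjection q) (x : H) : (p - q) x = x ↔ p x = x ∧ q x = 0 := by
  refine ⟨fun h => ?_, fun ⟨hpx, hqx⟩ => by simp [hpx, hqx]⟩
  have hre : ‖p x‖ ^ 2 - ‖q x‖ ^ 2 = ‖x‖ ^ 2 := by
    rw [← hp.re_inner_apply_self_s8, ← hq.re_inner_apply_self_s8, ← map_sub, ← inner_sub_left,
      ← sub_apply, h, inner_self_eq_norm_sq]
  have hpx : ‖p x‖ ≤ ‖x‖ :=
    (le_opNorm p x).trans (mul_le_of_le_one_left (norm_nonneg x) (hp.norm_le))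
  have hqx : q x = 0 := by
    rw [← norm_eq_zero]; nlinarith [norm_nonneg (q x), norm_nonneg (p x)]
  exact ⟨by simpa [hqx] using h, hqx⟩

theorem adjoint_compression {P : H →L[𝕜] H} (hP : IsSelfAdjoint P) (U : H →L[𝕜] H) :
    (P * U * P + (1 - P))† = P * U† * P + (1 - P) := by
  simp only [← star_eq_adjoint, star_add, star_sub, star_mul, star_one, hP.star_eq, mul_assoc]

theorem isClosed_range_compression {P U : H →L[𝕜] H} (hP : IsStarProjection P)
    (hK : IsCompactOperator (U† * P * U - P)) : IsClosed ((P * U * P + (1 - P)).range : Set H) := by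
  refine isClosed_range_of_isCompactOperator_adjoint_comp_self_sub_one ?_
  rw [← ContinuousLinearMap.mul_def, adjoint_compression hP.isSelfAdjoint,
    hP.isIdempotentElem.compression_mul_compression, add_sub_cancel_left,
    FunLike.coe_mul_eq_comp, FunLike.coe_mul_eq_comp]
  exact (hK.comp_clm P).clm_comp P

theorem ker_compression {P U : H →L[𝕜] H} (hP : IsStarProjection P) (hU : U * U† = 1) :
    (P * U * P + (1 - P)).ker = (U† * P * U - P + 1).ker := by
  have hQ : IsStarProjection (U† * P * U) := by
    simpa only [star_eq_adjoint] using hP.conjugate' (u := U) (by rwa [star_eq_adjoint])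
  have hflux : ∀ x, (U† * P * U - P + 1) x = 0 ↔ (P - U† * P * U) x = x := fun x => by
    rw [add_apply, one_apply_eq_self, ← neg_sub, neg_apply, neg_add_eq_zero, eq_comm]
  ext x
  rw [hP.isIdempotentElem.mem_ker_compression_iff, LinearMap.mem_ker, coe_coe, hflux,
    hP.sub_apply_eq_self_iff_s8 hQ, mul_apply_eq_comp, mul_apply_eq_comp]
  refine and_congr_right fun _ => ⟨fun h => by rw [h, map_zero], fun h => ?_⟩
  simpa [← mul_apply_eq_comp U, hU] using congr(U $h)

theorem map_ker_flux_sub_one {P U : H →L[𝕜] H} (hP : IsStarProjection P)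
    (hU : U ∈ unitary (H →L[𝕜] H)) :
    (U† * P * U - P - 1).ker.map (U : H →ₗ[𝕜] H) = (P * U * P + (1 - P))†.ker := by
  have hUU : ∀ y, U (adjoint U y) = y := fun y => congr($(hU.2) y)
  have hUU' : ∀ y, adjoint U (U y) = y := fun y => congr($(hU.1) y)
  have hQ : IsStarProjection (U† * P * U) := by
    simpa only [star_eq_adjoint] using hP.conjugate' hU.2
  have hflux : ∀ y, y ∈ (U† * P * U - P - 1).ker ↔ (U† * P * U) y = y ∧ P y = 0 := fun y => by
    rw [LinearMap.mem_ker, coe_coe, sub_apply, one_apply_eq_self, sub_eq_zero,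
      hQ.sub_apply_eq_self_iff_s8 hP]
  ext x
  rw [adjoint_compression hP.isSelfAdjoint, hP.isIdempotentElem.mem_ker_compression_iff]
  constructor
  · rintro ⟨y, hy, rfl⟩
    obtain ⟨hQy, hPy⟩ := (hflux y).1 hy
    rw [coe_coe]
    refine ⟨?_, by rw [hUU', hPy]⟩
    simpa [hUU] using congr(U $hQy)
  · rintro ⟨hPx, hPUx⟩
    exact ⟨adjoint U x, (hflux _).2 ⟨by simp [hUU, hPx], hPUx⟩, hUU x⟩

theorem index_compression {P U : H →L[𝕜] H} (hP : IsStarProjection P)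
    (hU : U ∈ unitary (H →L[𝕜] H)) (hK : IsCompactOperator (U† * P * U - P)) :
    FiniteDimensional 𝕜 (P * U * P + (1 - P)).ker ∧
      FiniteDimensional 𝕜 (H ⧸ (P * U * P + (1 - P)).range) ∧
      ((P * U * P + (1 - P) : H →L[𝕜] H) : H →ₗ[𝕜] H).index =
        (finrank 𝕜 (U† * P * U - P + 1).ker : ℤ) - finrank 𝕜 (U† * P * U - P - 1).ker := by
  have hU' : Injective U := fun x y h => by
    simpa [← mul_apply_eq_comp, ← star_eq_adjoint, hU.1] using congr(adjoint U $h)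
  obtain ⟨e⟩ := nonempty_quotient_range_equiv_ker_adjoint (isClosed_range_compression hP hK)
  have := hK.finiteDimensional_ker_sub_one
  let e' := e.trans (LinearEquiv.ofEq _ _ (map_ker_flux_sub_one hP hU).symm) ≪≫ₗ
    (equivMapOfInjective (U : H →ₗ[𝕜] H) hU' _).symm
  rw [ker_compression hP hU.2, LinearMap.index_eq_finrank_sub, ker_compression hP hU.2,
    e'.finrank_eq]
  exact ⟨hK.finiteDimensional_ker_add_one, e'.symm.finiteDimensional, rfl⟩

end Compression

/-- Let `P` be an orthogonal projection and `t ↦ U t`, `t ∈ [0,1]`, a norm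
continuous family of unitary operators such that each flux `Φ t = (U t)* P (U t) − P` is
compact. Then the eigenspaces `ker(Φ t ∓ 1)` are finite dimensional and the integer index
`ind(Φ t) = dim ker(Φ t − 1) − dim ker(Φ t + 1)` is constant on `[0,1]`. -/
theorem stmt_8 {H : Type*} [NormedAddCommGroup H] [InnerProductSpace ℂ H] [CompleteSpace H]
    (P : H →L[ℂ] H) (hPsa : IsSelfAdjoint P) (hPidem : P * P = P)
    (U : ℝ → (H →L[ℂ] H))
    (hU1 : ∀ t ∈ Set.Icc (0 : ℝ) 1, adjoint (U t) * U t = 1)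
    (hU2 : ∀ t ∈ Set.Icc (0 : ℝ) 1, U t * adjoint (U t) = 1)
    (hcont : ContinuousOn U (Set.Icc (0 : ℝ) 1))
    (Φ : ℝ → (H →L[ℂ] H))
    (hΦ : ∀ t, Φ t = adjoint (U t) * P * U t - P)
    (hcpt : ∀ t ∈ Set.Icc (0 : ℝ) 1, IsCompactOperator (Φ t)) :
    (∀ t ∈ Set.Icc (0 : ℝ) 1,
      FiniteDimensional ℂ (LinearMap.ker ((Φ t - 1 : H →L[ℂ] H) : H →ₗ[ℂ] H)) ∧
      FiniteDimensional ℂ (LinearMap.ker ((Φ t + 1 : H →L[ℂ] H) : H →ₗ[ℂ] H))) ∧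
    (∀ s ∈ Set.Icc (0 : ℝ) 1, ∀ t ∈ Set.Icc (0 : ℝ) 1,
      (Module.finrank ℂ (LinearMap.ker ((Φ s - 1 : H →L[ℂ] H) : H →ₗ[ℂ] H)) : ℤ)
          - (Module.finrank ℂ (LinearMap.ker ((Φ s + 1 : H →L[ℂ] H) : H →ₗ[ℂ] H)) : ℤ)
        = (Module.finrank ℂ (LinearMap.ker ((Φ t - 1 : H →L[ℂ] H) : H →ₗ[ℂ] H)) : ℤ)
          - (Module.finrank ℂ (LinearMap.ker ((Φ t + 1 : H →L[ℂ] H) : H →ₗ[ℂ] H)) : ℤ)) := by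
  obtain rfl : Φ = fun t => adjoint (U t) * P * U t - P := funext hΦ
  have hP : IsStarProjection P := ⟨hPidem, hPsa⟩
  have hA t (ht : t ∈ Set.Icc (0 : ℝ) 1) :=
    index_compression hP (U := U t) ⟨hU1 t ht, hU2 t ht⟩ (hcpt t ht)
  let index (t : ℝ) : ℤ := ((P * U t * P + (1 - P) : H →L[ℂ] H) : H →ₗ[ℂ] H).index
  have hindex : ContinuousOn index (Set.Icc 0 1) := fun t ht => by
    obtain ⟨_, _, -⟩ := hA t ht
    have hAt : ContinuousWithinAt (fun s => P * U s * P + (1 - P)) (Set.Icc 0 1) t :=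
      ((continuousWithinAt_const.mul (hcont t ht)).mul continuousWithinAt_const).add
        continuousWithinAt_const
    rw [ContinuousWithinAt, nhds_discrete, tendsto_pure]
    exact hAt.eventually (eventually_index_eq _)
  refine ⟨fun t ht => ?_, fun s hs t ht => ?_⟩
  · exact ⟨(hcpt t ht).finiteDimensional_ker_sub_one, (hcpt t ht).finiteDimensional_ker_add_one⟩
  · have h := isPreconnected_Icc.constant hindex hs ht
    have hs' := (hA s hs).2.2
    have ht' := (hA t ht).2.2
    simp only [index] at h
    beta_reduce
    omega
end

section
/- Let γ : {1,2,3,…} → ℤ^d be an admissible outgoing lead with tangent τ_γ, and let U = T∘ℂ be a quantum walk whose coin satisfies |⟨τ_γ(t+1), C(γ(t)) τ_γ(t)⟩| = 1 for all t ≥ 1. Let P_γ(t) denote the rank-one projection onto the vector |γ(t), τ_γ(t)⟩ ∈ ℓ²(ℤ^d; ℂ^{2d}). Then: (i) P_γ(t)P_γ(s) = 0 for all t ≠ s; (ii) U^n P_γ(1) (U*)^n = P_γ(1+n) for all n ≥ 1; (iii) Ran P_γ(1) is a wandering subspace for U; (iv) for the total projection ℙ_γ := ∑_{t≥1} P_γ(t)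 and Φ := U*ℙ_γU − ℙ_γ, the index is ind(Φ) = dim ker(Φ − 1) − dim ker(Φ + 1) = 1. -/
open ContinuousLinearMap

noncomputable section

/-- Sites of the lattice `ℤ^d`. -/
abbrev Site (d : ℕ) := Fin d → ℤ

/-- The coin space `ℂ^{2d}`. -/
abbrev CoinSp (d : ℕ) := EuclideanSpace ℂ (Fin (2 * d))

/-- The Hilbert space `ℓ²(ℤ^d; ℂ^{2d})`. -/
abbrev QWH (d : ℕ) := lp (fun _ : Site d => CoinSp d) 2

/-- The lattice vector of the `i`-th quantum direction. -/
def dirVec (d : ℕ) (i : Fin (2 * d)) : Site d :=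
  fun j => if (j : ℕ) = (i : ℕ) / 2 then (if (i : ℕ) % 2 = 0 then 1 else -1) else 0

/-- The coin-space basis vector `|τ⟩` of the `i`-th direction. -/
def coinVec (d : ℕ) (i : Fin (2 * d)) : CoinSp d := EuclideanSpace.single i 1

/-- The vector `|x₀, τ₀⟩ ∈ ℓ²(ℤ^d; ℂ^{2d})`, i.e. `x ↦ δ_{x,x₀} |τ₀⟩`. -/
def leadVec (d : ℕ) (x : Site d) (i : Fin (2 * d)) : QWH d :=
  lp.single 2 x (coinVec d i)

/-- The rank-one projection onto `|x₀, τ₀⟩`. -/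
def leadProj (d : ℕ) (x : Site d) (i : Fin (2 * d)) : QWH d →L[ℂ] QWH d :=
  (innerSL ℂ (leadVec d x i)).smulRight (leadVec d x i)

/-!
Write `v_t = |γ t, τ t⟩`. A unitary coin with an entry of modulus one maps `|τ t⟩` to a phase
times `|τ (t+1)⟩`, so `U v_t = c_t v_{t+1}` with `|c_t| = 1`: the walk moves the orthonormal
family `(v_t)` one step forward up to phases. Conjugation by `U` therefore shifts the rank-one
projections `P_γ(t)`, which gives (ii), and `⟪U^k v_1, v_1⟫ = 0` gives (iii). In
`U* ℙ_γ U = ∑_{t ≥ 1} P_{U* v_t}` every term but the first is `P_γ(t-1)`, so `Φ` is the rank-one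
projection onto the unit vector `U* v_1`, whose index is `1 - 0`.
-/

open InnerProductSpace

section RankOne

variable {𝕜 E : Type*} [RCLike 𝕜] [NormedAddCommGroup E] [InnerProductSpace 𝕜 E]

lemma eq_inner_smul_of_norm_inner_eq_one {u v : E} (hu : ‖u‖ = 1) (hv : ‖v‖ = 1)
    (huv : ‖⟪u, v⟫_𝕜‖ = 1) : v = ⟪u, v⟫_𝕜 • u := by
  have hu0 : u ≠ 0 := norm_ne_zero_iff.mp (by rw [hu]; exact one_ne_zero)
  have hv0 : v ≠ 0 := norm_ne_zero_iff.mp (by rw [hv]; exact one_ne_zero)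
  obtain ⟨r, -, rfl⟩ := (norm_inner_eq_norm_iff hu0 hv0).mp (by rw [huv, hu, hv, one_mul])
  rw [inner_smul_right, inner_self_eq_norm_sq_to_K, hu]
  simp

lemma rankOne_smul_self {c : 𝕜} (hc : ‖c‖ = 1) (v : E) :
    rankOne 𝕜 (c • v) (c • v) = rankOne 𝕜 v v := by
  ext ψ
  simp only [rankOne_apply, inner_smul_left, smul_smul]
  have hcc : c * starRingEnd 𝕜 c = 1 := by rw [RCLike.mul_conj, hc]; simp
  congr 1
  linear_combination ⟪v, ψ⟫_𝕜 * hcc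

lemma rankOne_self_mul_rankOne_self_of_inner_eq_zero {v w : E} (h : ⟪v, w⟫_𝕜 = 0) :
    rankOne 𝕜 v v * rankOne 𝕜 w w = 0 := by
  rw [mul_def, rankOne_comp_rankOne, h, zero_smul]

lemma inner_apply_eq_zero_of_mem_range_rankOne {A : E →L[𝕜] E} {w x y : E}
    (hw : ⟪A w, w⟫_𝕜 = 0) (hx : x ∈ LinearMap.range (rankOne 𝕜 w w : E →ₗ[𝕜] E))
    (hy : y ∈ LinearMap.range (rankOne 𝕜 w w : E →ₗ[𝕜] E)) : ⟪A x, y⟫_𝕜 = 0 := by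
  obtain ⟨x, rfl⟩ := hx
  obtain ⟨y, rfl⟩ := hy
  simp [inner_smul_left, inner_smul_right, hw]

lemma ker_rankOne_self_sub_one {w : E} (hw : ‖w‖ = 1) :
    LinearMap.ker ((rankOne 𝕜 w w - 1 : E →L[𝕜] E) : E →ₗ[𝕜] E) = 𝕜 ∙ w := by
  ext ψ
  simp only [LinearMap.mem_ker, coe_coe, sub_apply, rankOne_apply, one_apply_eq_self, sub_eq_zero,
    Submodule.mem_span_singleton]
  constructor
  · exact fun h => ⟨_, h⟩
  · rintro ⟨a, rfl⟩
    rw [inner_smul_right, inner_self_eq_norm_sq_to_K, hw]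
    simp

lemma ker_rankOne_self_add_one {w : E} (hw : ‖w‖ = 1) :
    LinearMap.ker ((rankOne 𝕜 w w + 1 : E →L[𝕜] E) : E →ₗ[𝕜] E) = ⊥ := by
  refine (Submodule.eq_bot_iff _).mpr fun ψ hψ => ?_
  simp only [LinearMap.mem_ker, coe_coe, add_apply, rankOne_apply, one_apply_eq_self] at hψ
  have hwψ : ⟪w, ψ⟫_𝕜 = 0 := by
    have h := congrArg (⟪w, ·⟫_𝕜) hψ
    simp only [inner_add_right, inner_smul_right, inner_self_eq_norm_sq_to_K, hw,
      RCLike.ofReal_one, one_pow, mul_one, inner_zero_right] at h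
    linear_combination h / 2
  simpa [hwψ] using hψ

lemma index_rankOne_self {w : E} (hw : ‖w‖ = 1) :
    FiniteDimensional 𝕜 (LinearMap.ker ((rankOne 𝕜 w w - 1 : E →L[𝕜] E) : E →ₗ[𝕜] E)) ∧
    FiniteDimensional 𝕜 (LinearMap.ker ((rankOne 𝕜 w w + 1 : E →L[𝕜] E) : E →ₗ[𝕜] E)) ∧
    (Module.finrank 𝕜 (LinearMap.ker ((rankOne 𝕜 w w - 1 : E →L[𝕜] E) : E →ₗ[𝕜] E)) : ℤ)
      - Module.finrank 𝕜 (LinearMap.ker ((rankOne 𝕜 w w + 1 : E →L[𝕜] E) : E →ₗ[𝕜] E)) = 1 := by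
  have hw0 : w ≠ 0 := norm_ne_zero_iff.mp (by rw [hw]; exact one_ne_zero)
  rw [ker_rankOne_self_sub_one hw, ker_rankOne_self_add_one hw, finrank_span_singleton hw0,
    finrank_bot]
  exact ⟨inferInstance, inferInstance, by norm_num⟩

variable [CompleteSpace E]

lemma conj_rankOne_self (U : E →L[𝕜] E) (v : E) :
    U * rankOne 𝕜 v v * adjoint U = rankOne 𝕜 (U v) (U v) := by
  rw [mul_def, mul_def, comp_rankOne, rankOne_comp, adjoint_adjoint]

end RankOne

section Transport

variable {𝕜 E : Type*} [RCLike 𝕜] [NormedAddCommGroup E] [InnerProductSpace 𝕜 E]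
  {U : E →L[𝕜] E} {v : ℕ → E}

lemma exists_pow_apply_eq_smul
    (hUv : ∀ t, 1 ≤ t → ∃ c : 𝕜, ‖c‖ = 1 ∧ U (v t) = c • v (t + 1)) (n : ℕ) {t : ℕ}
    (ht : 1 ≤ t) : ∃ c : 𝕜, ‖c‖ = 1 ∧ (U ^ n) (v t) = c • v (t + n) := by
  induction n with
  | zero => exact ⟨1, norm_one, by simp⟩
  | succ n ih =>
    obtain ⟨c, hc, hcv⟩ := ih
    obtain ⟨c', hc', hcv'⟩ := hUv (t + n) (by omega)
    refine ⟨c * c', by rw [norm_mul, hc, hc', one_mul], ?_⟩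
    rw [pow_succ', mul_apply_eq_comp, hcv, map_smul, hcv', smul_smul, Nat.add_assoc]

variable [CompleteSpace E]

lemma pow_mul_rankOne_mul_adjoint_pow
    (hUv : ∀ t, 1 ≤ t → ∃ c : 𝕜, ‖c‖ = 1 ∧ U (v t) = c • v (t + 1)) (n : ℕ) {t : ℕ}
    (ht : 1 ≤ t) :
    U ^ n * rankOne 𝕜 (v t) (v t) * adjoint U ^ n = rankOne 𝕜 (v (t + n)) (v (t + n)) := by
  obtain ⟨c, hc, hcv⟩ := exists_pow_apply_eq_smul hUv n ht
  rw [← star_eq_adjoint, ← star_pow, star_eq_adjoint, conj_rankOne_self, hcv,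
    rankOne_smul_self hc]

lemma adjoint_mul_rankOne_succ_mul (hU : U ∈ unitary (E →L[𝕜] E)) {t : ℕ} {c : 𝕜}
    (hc : ‖c‖ = 1) (hcv : U (v t) = c • v (t + 1)) :
    adjoint U * rankOne 𝕜 (v (t + 1)) (v (t + 1)) * U = rankOne 𝕜 (v t) (v t) := by
  have hUU : adjoint U (U (v t)) = v t := by
    rw [← star_eq_adjoint, ← mul_apply_eq_comp, Unitary.star_mul_self_of_mem hU, one_apply_eq_self]
  rw [← rankOne_smul_self hc, ← hcv]
  have h := conj_rankOne_self (adjoint U) (U (v t))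
  rwa [adjoint_adjoint, hUU] at h

lemma adjoint_mul_mul_sub_eq_rankOne (hU : U ∈ unitary (E →L[𝕜] E))
    (hUv : ∀ t, 1 ≤ t → ∃ c : 𝕜, ‖c‖ = 1 ∧ U (v t) = c • v (t + 1)) {P : E →L[𝕜] E}
    (hP : ∀ ψ, HasSum (fun t : ℕ+ => rankOne 𝕜 (v t) (v t) ψ) (P ψ)) :
    adjoint U * P * U - P = rankOne 𝕜 (adjoint U (v 1)) (adjoint U (v 1)) := by
  ext ψ
  let g : ℕ → E := fun t => (adjoint U * rankOne 𝕜 (v t) (v t) * U) ψ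
  have hg : ∀ t, 1 ≤ t → g (t + 1) = rankOne 𝕜 (v t) (v t) ψ := fun t ht => by
    obtain ⟨c, hc, hcv⟩ := hUv t ht
    simp only [g, adjoint_mul_rankOne_succ_mul hU hc hcv]
  have hUPU : HasSum (fun n => g (n + 1)) ((adjoint U * P * U) ψ) :=
    hasSum_pnat_iff_hasSum_succ.mp ((hP (U ψ)).mapL (adjoint U))
  have hPg : HasSum (fun n => g (n + 1)) (P ψ + g 1) := by
    refine hasSum_pnat_iff.mp ?_
    convert hP ψ using 2 with t
    exact hg t t.pos
  rw [sub_apply, hUPU.unique hPg, add_sub_cancel_left]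
  simp only [g, mul_apply_eq_comp, rankOne_apply, map_smul, adjoint_inner_left]

end Transport

lemma orthonormal_leadVec (d : ℕ) :
    Orthonormal ℂ (fun p : Site d × Fin (2 * d) => leadVec d p.1 p.2) := by
  rw [orthonormal_iff_ite]
  rintro ⟨x, i⟩ ⟨y, j⟩
  by_cases hxy : x = y
  · subst hxy
    simp [leadVec, lp.inner_single_left, coinVec, EuclideanSpace.inner_single_left]
  · simp [leadVec, lp.inner_single_left, hxy]

lemma inner_leadVec_eq_zero {d : ℕ} {x y : Site d} {i j : Fin (2 * d)} (h : (x, i) ≠ (y, j)) :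
    ⟪leadVec d x i, leadVec d y j⟫_ℂ = 0 :=
  (orthonormal_leadVec d).inner_eq_zero (i := (x, i)) (j := (y, j)) h

lemma norm_leadVec (d : ℕ) (x : Site d) (i : Fin (2 * d)) : ‖leadVec d x i‖ = 1 :=
  (orthonormal_leadVec d).1 (x, i)

lemma leadVec_apply {d : ℕ} (x y : Site d) (j i : Fin (2 * d)) :
    (leadVec d x j : Site d → CoinSp d) y i = if y = x ∧ i = j then 1 else 0 := by
  by_cases hy : y = x
  · subst hy
    simp [leadVec, coinVec]
  · simp [leadVec, hy]

lemma walk_apply_lpSingle {d : ℕ} {C : Site d → (CoinSp d →L[ℂ] CoinSp d)} {U : QWH d →L[ℂ] QWH d}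
    (hU : ∀ (ψ : QWH d) (x : Site d) (i : Fin (2 * d)),
      (U ψ) x i = (C (x - dirVec d i) (ψ (x - dirVec d i))) i)
    {x : Site d} {v : CoinSp d} {c : ℂ} {j : Fin (2 * d)} (hC : C x v = c • coinVec d j) :
    U (lp.single 2 x v) = c • leadVec d (x + dirVec d j) j := by
  ext y i
  rw [hU, lp.coeFn_smul, Pi.smul_apply, PiLp.smul_apply, leadVec_apply, lp.single_apply]
  by_cases hy : y - dirVec d i = x
  · have hy' : y = x + dirVec d i := sub_eq_iff_eq_add.mp hy
    by_cases hi : i = j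
    · subst hi
      simp [hy', hC, coinVec]
    · simp [hy, hC, coinVec, hi]
  · have hy' : y ≠ x + dirVec d i := fun h => hy (sub_eq_iff_eq_add.mpr h)
    by_cases hi : i = j
    · subst hi
      simp [hy, hy']
    · simp [hy, hi]

lemma walk_apply_leadVec {d : ℕ} {C : Site d → (CoinSp d →L[ℂ] CoinSp d)}
    {U : QWH d →L[ℂ] QWH d}
    (hU : ∀ (ψ : QWH d) (x : Site d) (i : Fin (2 * d)),
      (U ψ) x i = (C (x - dirVec d i) (ψ (x - dirVec d i))) i)
    {x : Site d} (hC : C x ∈ unitary (CoinSp d →L[ℂ] CoinSp d)) {i j : Fin (2 * d)}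
    (hCij : ‖⟪coinVec d j, C x (coinVec d i)⟫_ℂ‖ = 1) :
    U (leadVec d x i) = ⟪coinVec d j, C x (coinVec d i)⟫_ℂ • leadVec d (x + dirVec d j) j := by
  have norm_coinVec : ∀ k, ‖coinVec d k‖ = 1 := fun k => by simp [coinVec]
  refine walk_apply_lpSingle hU (eq_inner_smul_of_norm_inner_eq_one (norm_coinVec j) ?_ hCij)
  rw [norm_map_of_mem_unitary hC, norm_coinVec]

theorem stmt_12_general (d : ℕ)
    (γ : ℕ → Site d) (τ : ℕ → Fin (2 * d))
    (hstep : ∀ t : ℕ, 2 ≤ t → γ t - γ (t - 1) = dirVec d (τ t))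
    (hadm : ∀ s t : ℕ, 1 ≤ s → 1 ≤ t → (γ s, τ s) = (γ t, τ t) → s = t)
    (C : Site d → (CoinSp d →L[ℂ] CoinSp d))
    (hCunit : ∀ x, adjoint (C x) * C x = 1 ∧ C x * adjoint (C x) = 1)
    (hCγ : ∀ t : ℕ, 1 ≤ t →
      ‖@inner ℂ _ _ (coinVec d (τ (t + 1))) (C (γ t) (coinVec d (τ t)))‖ = 1)
    (U : QWH d →L[ℂ] QWH d)
    (hUunit : adjoint U * U = 1 ∧ U * adjoint U = 1)
    (hU : ∀ (ψ : QWH d) (x : Site d) (i : Fin (2 * d)),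
      (U ψ) x i = (C (x - dirVec d i) (ψ (x - dirVec d i))) i)
    (Ptot : QWH d →L[ℂ] QWH d)
    (hPtot : ∀ ψ : QWH d,
      HasSum (fun t : {t : ℕ // 1 ≤ t} => leadProj d (γ t.1) (τ t.1) ψ) (Ptot ψ))
    (Φ : QWH d →L[ℂ] QWH d) (hΦ : Φ = adjoint U * Ptot * U - Ptot) :
    (∀ s t : ℕ, 1 ≤ s → 1 ≤ t → s ≠ t →
      leadProj d (γ t) (τ t) * leadProj d (γ s) (τ s) = 0) ∧
    (∀ n : ℕ, 1 ≤ n →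
      U ^ n * leadProj d (γ 1) (τ 1) * (adjoint U) ^ n = leadProj d (γ (1 + n)) (τ (1 + n))) ∧
    (∀ x ∈ LinearMap.range (leadProj d (γ 1) (τ 1) : QWH d →ₗ[ℂ] QWH d),
      ∀ y ∈ LinearMap.range (leadProj d (γ 1) (τ 1) : QWH d →ₗ[ℂ] QWH d),
      ∀ k : ℕ, 1 ≤ k → @inner ℂ _ _ ((U ^ k) x) y = 0) ∧
    (FiniteDimensional ℂ (LinearMap.ker ((Φ - 1 : QWH d →L[ℂ] QWH d) : QWH d →ₗ[ℂ] QWH d)) ∧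
     FiniteDimensional ℂ (LinearMap.ker ((Φ + 1 : QWH d →L[ℂ] QWH d) : QWH d →ₗ[ℂ] QWH d)) ∧
     (Module.finrank ℂ (LinearMap.ker ((Φ - 1 : QWH d →L[ℂ] QWH d) : QWH d →ₗ[ℂ] QWH d)) : ℤ)
        - (Module.finrank ℂ (LinearMap.ker ((Φ + 1 : QWH d →L[ℂ] QWH d) : QWH d →ₗ[ℂ] QWH d)) : ℤ) = 1) := by
  have horth : ∀ s t, 1 ≤ s → 1 ≤ t → s ≠ t →
      ⟪leadVec d (γ t) (τ t), leadVec d (γ s) (τ s)⟫_ℂ = 0 := fun s t hs ht hst =>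
    inner_leadVec_eq_zero fun h => hst (hadm s t hs ht h.symm)
  have hUv : ∀ t, 1 ≤ t → ∃ c : ℂ, ‖c‖ = 1 ∧
      U (leadVec d (γ t) (τ t)) = c • leadVec d (γ (t + 1)) (τ (t + 1)) := fun t ht => by
    have hγ : γ (t + 1) = γ t + dirVec d (τ (t + 1)) := by
      simpa [sub_eq_iff_eq_add'] using hstep (t + 1) (by omega)
    rw [hγ]
    exact ⟨_, hCγ t ht, walk_apply_leadVec hU (Unitary.mem_iff.mpr (hCunit _)) (hCγ t ht)⟩
  have hUu : U ∈ unitary (QWH d →L[ℂ] QWH d) := Unitary.mem_iff.mpr hUunit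
  refine ⟨fun s t hs ht hst => rankOne_self_mul_rankOne_self_of_inner_eq_zero (horth s t hs ht hst),
    fun n _ => pow_mul_rankOne_mul_adjoint_pow (v := fun t => leadVec d (γ t) (τ t)) hUv n le_rfl,
    ?_, ?_⟩
  · intro x hx y hy k hk
    obtain ⟨c, -, hc⟩ := exists_pow_apply_eq_smul (v := fun t => leadVec d (γ t) (τ t)) hUv k le_rfl
    refine inner_apply_eq_zero_of_mem_range_rankOne ?_ hx hy
    rw [hc, inner_smul_left, horth 1 (1 + k) le_rfl (by omega) (by omega), mul_zero]
  · rw [hΦ, adjoint_mul_mul_sub_eq_rankOne hUu (v := fun t => leadVec d (γ t) (τ t)) hUv hPtot]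
    refine index_rankOne_self ?_
    rw [← star_eq_adjoint, norm_map_of_mem_unitary (Unitary.star_mem hUu)]
    exact norm_leadVec d _ _

/-- Let `γ` (with tangent `τ_γ`) be an admissible outgoing lead and `U = T∘ℂ`
a quantum walk with `|⟨τ_γ(t+1), C(γ(t)) τ_γ(t)⟩| = 1` along the lead. Then the projections
`P_γ(t)` are mutually orthogonal, `U^n P_γ(1) U*^n = P_γ(1+n)`, `Ran P_γ(1)` is wandering for
`U`, and the flux of the total lead projection `ℙ_γ = ∑_{t ≥ 1} P_γ(t)` has index `1`. -/
theorem stmt_12 (d : ℕ) (hd : 1 ≤ d)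
    (γ : ℕ → Site d) (τ : ℕ → Fin (2 * d))
    (hstep : ∀ t : ℕ, 2 ≤ t → γ t - γ (t - 1) = dirVec d (τ t))
    (hτ1 : τ 1 = τ 2)
    (hadm : ∀ s t : ℕ, 1 ≤ s → 1 ≤ t → (γ s, τ s) = (γ t, τ t) → s = t)
    (C : Site d → (CoinSp d →L[ℂ] CoinSp d))
    (hCunit : ∀ x, adjoint (C x) * C x = 1 ∧ C x * adjoint (C x) = 1)
    (hCγ : ∀ t : ℕ, 1 ≤ t →
      ‖@inner ℂ _ _ (coinVec d (τ (t + 1))) (C (γ t) (coinVec d (τ t)))‖ = 1)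
    (U : QWH d →L[ℂ] QWH d)
    (hUunit : adjoint U * U = 1 ∧ U * adjoint U = 1)
    (hU : ∀ (ψ : QWH d) (x : Site d) (i : Fin (2 * d)),
      (U ψ) x i = (C (x - dirVec d i) (ψ (x - dirVec d i))) i)
    (Ptot : QWH d →L[ℂ] QWH d)
    (hPtot : ∀ ψ : QWH d,
      HasSum (fun t : {t : ℕ // 1 ≤ t} => leadProj d (γ t.1) (τ t.1) ψ) (Ptot ψ))
    (Φ : QWH d →L[ℂ] QWH d) (hΦ : Φ = adjoint U * Ptot * U - Ptot) :
    (∀ s t : ℕ, 1 ≤ s → 1 ≤ t → s ≠ t →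
      leadProj d (γ t) (τ t) * leadProj d (γ s) (τ s) = 0) ∧
    (∀ n : ℕ, 1 ≤ n →
      U ^ n * leadProj d (γ 1) (τ 1) * (adjoint U) ^ n = leadProj d (γ (1 + n)) (τ (1 + n))) ∧
    (∀ x ∈ LinearMap.range (leadProj d (γ 1) (τ 1) : QWH d →ₗ[ℂ] QWH d),
      ∀ y ∈ LinearMap.range (leadProj d (γ 1) (τ 1) : QWH d →ₗ[ℂ] QWH d),
      ∀ k : ℕ, 1 ≤ k → @inner ℂ _ _ ((U ^ k) x) y = 0) ∧
    (FiniteDimensional ℂ (LinearMap.ker ((Φ - 1 : QWH d →L[ℂ] QWH d) : QWH d →ₗ[ℂ] QWH d)) ∧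
     FiniteDimensional ℂ (LinearMap.ker ((Φ + 1 : QWH d →L[ℂ] QWH d) : QWH d →ₗ[ℂ] QWH d)) ∧
     (Module.finrank ℂ (LinearMap.ker ((Φ - 1 : QWH d →L[ℂ] QWH d) : QWH d →ₗ[ℂ] QWH d)) : ℤ)
        - (Module.finrank ℂ (LinearMap.ker ((Φ + 1 : QWH d →L[ℂ] QWH d) : QWH d →ₗ[ℂ] QWH d)) : ℤ) = 1) :=
  stmt_12_general d γ τ hstep hadm C hCunit hCγ U hUunit hU Ptot hPtot Φ hΦ
end
end
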